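/- arXiv:2403.05178 — 3 statements merged into one kernel-verified Lean document; each statement's English description precedes it below -/
import Mathlib

section
/- Let u ∈ V(G) with u ≠ r, let u' be the parent of u in T, and let e = vv' ∈ E(F) be such that the graph (F + uu') − e contains no cycle. Then the following are equivalent: (a) (T − uu') + e is a spanning tree of G and (F − e) + uu' is a forest; (b) the edge uu' lies in the unique cycle of T + e; (c) up to relabelling v as v', v is a descendant of u in T and v' is not a descendant of u in T. -/
/-!
Multigraphs are modelled by a finite vertex type `V`, a finite edge-index type `E`
and an incidence map `ends : E → Sym2 V` giving the two endpoints of each edge;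
`Loopless` says no edge is a loop.  Parallel edges are allowed.
-/

open Classical

/-- `y` is reachable from `x` using (undirected) edges from the edge set `A`. -/
def Reach {V E : Type} (ends : E → Sym2 V) (A : Set E) (x y : V) : Prop :=
  Relation.ReflTransGen (fun a b => ∃ e ∈ A, ends e = s(a, b)) x y

/-- The edge set `A` induces a forest (an acyclic graph) on `V`:
no edge of `A` has its endpoints joined by a walk avoiding that edge. -/
def IsForest {V E : Type} (ends : E → Sym2 V) (A : Set E) : Prop :=
  ∀ e ∈ A, ∀ x y : V, ends e = s(x, y) → ¬ Reach ends (A \ {e}) x y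

/-- The edge set `A` induces a spanning tree: a forest connecting all vertices. -/
def IsSpanningTree {V E : Type} (ends : E → Sym2 V) (A : Set E) : Prop :=
  IsForest ends A ∧ ∀ x y : V, Reach ends A x y

/-- `(S, A)` is a subgraph: every endpoint of an edge of `A` lies in `S`. -/
def IsSub {V E : Type} (ends : E → Sym2 V) (S : Set V) (A : Set E) : Prop :=
  ∀ e ∈ A, ∀ w ∈ ends e, w ∈ S

/-- The graph has no loops. -/
def Loopless {V E : Type} (ends : E → Sym2 V) : Prop :=
  ∀ e, ¬ (ends e).IsDiag

/-- The fractional arboricity of the graph is at most `c`: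
every subgraph `H` with `v(H) ≥ 2` satisfies `e(H) ≤ c * (v(H) - 1)`. -/
def FracArbLE {V E : Type} (ends : E → Sym2 V) (c : ℚ) : Prop :=
  ∀ (S : Set V) (A : Set E), IsSub ends S A → 2 ≤ S.ncard →
    (A.ncard : ℚ) ≤ c * ((S.ncard : ℚ) - 1)

/-- `(k,d)`-sparseness: every nonempty subgraph `H` satisfies
`(k+1)(k+d)·v(H) − (k+d+1)·e(H) − k² ≥ 0`. -/
def Sparse {V E : Type} (k d : ℕ) (ends : E → Sym2 V) : Prop :=
  ∀ (S : Set V) (A : Set E), IsSub ends S A → S.Nonempty →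
    0 ≤ ((k : ℤ) + 1) * ((k : ℤ) + (d : ℤ)) * (S.ncard : ℤ)
        - ((k : ℤ) + (d : ℤ) + 1) * (A.ncard : ℤ) - (k : ℤ) ^ 2

/-- `G` has no `(k+1)`-overfull subgraph: every nonempty subgraph `H`
satisfies `e(H) ≤ (k+1)(v(H) − 1)`. -/
def NoOverfull {V E : Type} (k : ℕ) (ends : E → Sym2 V) : Prop :=
  ∀ (S : Set V) (A : Set E), IsSub ends S A → S.Nonempty →
    (A.ncard : ℤ) ≤ ((k : ℤ) + 1) * ((S.ncard : ℤ) - 1)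

/-- Vertex set of the connected component of `v` in the spanning subgraph with edge set `A`. -/
def compV {V E : Type} (ends : E → Sym2 V) (A : Set E) (v : V) : Set V :=
  {w | Reach ends A v w}

/-- Edge set of the connected component of `v` in the spanning subgraph with edge set `A`. -/
def compE {V E : Type} (ends : E → Sym2 V) (A : Set E) (v : V) : Set E :=
  {e | e ∈ A ∧ ∀ w ∈ ends e, Reach ends A v w}

/-- A good `(k,d)`-decomposition: a partition of the edge set into `k+1` forests on `V`
such that every connected component of one of the forests has at most `d` edges. -/
def GoodDecomp {V E : Type} (k d : ℕ) (ends : E → Sym2 V) : Prop :=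
  ∃ c : E → Fin (k + 1),
    (∀ i, IsForest ends {e | c e = i}) ∧
    ∃ i, ∀ v : V, (compE ends {e | c e = i} v).ncard ≤ d

/-- `a` is a descendant of `b` in the tree `T` rooted at `r`: the unique path in `T`
from `a` to `r` passes through `b` (equivalently, `a = b` or `a` cannot reach `r`
in `T` after deleting all edges incident to `b`). -/
def Descendant {V E : Type} (ends : E → Sym2 V) (T : Set E) (r a b : V) : Prop :=
  a = b ∨ ¬ Reach ends {e | e ∈ T ∧ b ∉ ends e} a r

/-- The edge `t` lies on a cycle of the graph with edge set `A`:
its endpoints are joined by a walk in `A` avoiding `t`. -/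
def OnACycle {V E : Type} (ends : E → Sym2 V) (A : Set E) (t : E) : Prop :=
  t ∈ A ∧ ∃ a b : V, ends t = s(a, b) ∧ Reach ends (A \ {t}) a b

/-!
Deleting the tree edge `t = uu'` splits `T` into two components: the side of `u`, which is
exactly the set of descendants of `u` because `u'` is the parent of `u`, and the side of `u'`.
The edge `e` closes a cycle through `t` in `T + e` exactly when it joins the two sides, and
exactly then `T − t + e` is connected and acyclic; the forest half of (a) is the hypothesis on
`(F + uu') − e` read with `e ≠ t`.
-/

theorem Sym2.exists_mk_eq_and_not_iff_xor {α : Type*} {P : α → Prop} {x y : α} :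
    (∃ a b, s(x, y) = s(a, b) ∧ P a ∧ ¬ P b) ↔ Xor (P x) (P y) := by
  constructor
  · rintro ⟨a, b, hab, ha, hb⟩
    rcases Sym2.eq_iff.mp hab with ⟨rfl, rfl⟩ | ⟨rfl, rfl⟩
    · exact Or.inl ⟨ha, hb⟩
    · exact Or.inr ⟨ha, hb⟩
  · rintro (⟨hx, hy⟩ | ⟨hy, hx⟩)
    · exact ⟨x, y, rfl, hx, hy⟩
    · exact ⟨y, x, Sym2.eq_swap, hy, hx⟩

section Reach

variable {V E : Type} {ends : E → Sym2 V} {A B : Set E} {x y : V}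

theorem Reach.mono (hAB : A ⊆ B) (h : Reach ends A x y) : Reach ends B x y :=
  Relation.ReflTransGen.mono (fun _ _ ⟨f, hf, hfe⟩ => ⟨f, hAB hf, hfe⟩) _ _ h

theorem Reach.trans {z : V} (hxy : Reach ends A x y) (hyz : Reach ends A y z) :
    Reach ends A x z :=
  Relation.ReflTransGen.trans hxy hyz

theorem Reach.single {f : E} (hf : f ∈ A) (hfe : ends f = s(x, y)) : Reach ends A x y :=
  Relation.ReflTransGen.single ⟨f, hf, hfe⟩

theorem Reach.symm (h : Reach ends A x y) : Reach ends A y x := by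
  induction h with
  | refl => exact Relation.ReflTransGen.refl
  | tail _ step ih =>
    obtain ⟨f, hf, hfe⟩ := step
    exact (Reach.single hf (hfe.trans Sym2.eq_swap)).trans ih

theorem Reach.of_mk_eq {a b : V} (hab : s(a, b) = s(x, y)) (h : Reach ends A a b) :
    Reach ends A x y := by
  rcases Sym2.eq_iff.mp hab with ⟨rfl, rfl⟩ | ⟨rfl, rfl⟩
  · exact h
  · exact h.symm

theorem Reach.of_union_singleton {g : E} {p q : V} (hg : ends g = s(p, q))
    (h : Reach ends (A ∪ {g}) x y) :
    Reach ends A x y ∨ (Reach ends A x p ∧ Reach ends A q y) ∨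
      (Reach ends A x q ∧ Reach ends A p y) := by
  induction h with
  | refl => exact Or.inl Relation.ReflTransGen.refl
  | @tail b c _ step ih =>
    obtain ⟨f, hf | rfl, hfe⟩ := step
    · have hbc : Reach ends A b c := Reach.single hf hfe
      rcases ih with h | ⟨h₁, h₂⟩ | ⟨h₁, h₂⟩
      · exact Or.inl (h.trans hbc)
      · exact Or.inr (Or.inl ⟨h₁, h₂.trans hbc⟩)
      · exact Or.inr (Or.inr ⟨h₁, h₂.trans hbc⟩)
    · rcases Sym2.eq_iff.mp (hg.symm.trans hfe) with ⟨rfl, rfl⟩ | ⟨rfl, rfl⟩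
      · rcases ih with h | ⟨h₁, -⟩ | ⟨h₁, -⟩
        · exact Or.inr (Or.inl ⟨h, Relation.ReflTransGen.refl⟩)
        · exact Or.inr (Or.inl ⟨h₁, Relation.ReflTransGen.refl⟩)
        · exact Or.inl h₁
      · rcases ih with h | ⟨h₁, -⟩ | ⟨h₁, -⟩
        · exact Or.inr (Or.inr ⟨h, Relation.ReflTransGen.refl⟩)
        · exact Or.inl h₁
        · exact Or.inr (Or.inr ⟨h₁, Relation.ReflTransGen.refl⟩)

theorem Reach.of_sdiff_singleton_or {t : E} {u u' : V} (htends : ends t = s(u, u'))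
    (h : Reach ends A x y) :
    Reach ends (A \ {t}) x y ∨ (Reach ends (A \ {t}) x u ∧ Reach ends (A \ {t}) u' y) ∨
      (Reach ends (A \ {t}) x u' ∧ Reach ends (A \ {t}) u y) :=
  (h.mono fun f hf => by by_cases hft : f = t <;> simp [hft, hf]).of_union_singleton htends

theorem Reach.avoid {u : V} (h : Reach ends A x y) (hu : ¬ Reach ends A x u) :
    Reach ends {f | f ∈ A ∧ u ∉ ends f} x y := by
  induction h with
  | refl => exact Relation.ReflTransGen.refl
  | @tail b c hxb step ih =>
    obtain ⟨f, hf, hfe⟩ := step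
    have hxc : Reach ends A x c := hxb.trans (Reach.single hf hfe)
    have hu_f : u ∉ ends f := by
      rw [hfe, Sym2.mem_iff]
      rintro (rfl | rfl)
      exacts [hu hxb, hu hxc]
    exact ih.trans (Reach.single ⟨hf, hu_f⟩ hfe)

end Reach

section Forest

variable {V E : Type} {ends : E → Sym2 V} {A B : Set E}

theorem IsForest.mono (hA : IsForest ends A) (hBA : B ⊆ A) : IsForest ends B :=
  fun f hf x y hxy hr => hA f (hBA hf) x y hxy (hr.mono (Set.sdiff_subset_sdiff_left hBA))

theorem IsForest.union_singleton (hA : IsForest ends A) {g : E} {p q : V}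
    (hg : ends g = s(p, q)) (hpq : ¬ Reach ends A p q) : IsForest ends (A ∪ {g}) := by
  have hgA : g ∉ A := fun hgA => hpq (Reach.single hgA hg)
  rintro f (hfA | rfl) x y hxy hr
  · have hfg : f ≠ g := fun h => hgA (h ▸ hfA)
    rw [Set.union_sdiff_distrib, Set.sdiff_singleton_eq_self (Set.mem_singleton_iff.not.2 hfg)]
      at hr
    have hxy' : Reach ends A x y := Reach.single hfA hxy
    rcases hr.of_union_singleton hg with h | ⟨hxp, hqy⟩ | ⟨hxq, hpy⟩
    · exact hA f hfA x y hxy h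
    · exact hpq (((hxp.mono Set.sdiff_subset).symm.trans hxy').trans
        (hqy.mono Set.sdiff_subset).symm)
    · exact hpq (((hpy.mono Set.sdiff_subset).trans hxy'.symm).trans (hxq.mono Set.sdiff_subset))
  · refine hpq ((hr.mono fun f hf => ?_).of_mk_eq (hxy.symm.trans hg))
    rcases hf with ⟨hf | hf, hfg⟩
    exacts [hf, absurd hf hfg]

end Forest

theorem onACycle_iff {V E : Type} {ends : E → Sym2 V} {A : Set E} {t : E} {u u' : V}
    (htends : ends t = s(u, u')) :
    OnACycle ends A t ↔ t ∈ A ∧ Reach ends (A \ {t}) u u' := by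
  refine and_congr_right fun _ => ⟨?_, fun h => ⟨u, u', htends, h⟩⟩
  rintro ⟨a, b, hab, h⟩
  exact h.of_mk_eq (hab.symm.trans htends)

namespace IsSpanningTree

variable {V E : Type} {ends : E → Sym2 V} {T : Set E} {t : E} {u u' : V}

theorem not_reach_sdiff_singleton_iff (hT : IsSpanningTree ends T) (ht : t ∈ T)
    (htends : ends t = s(u, u')) (x : V) :
    ¬ Reach ends (T \ {t}) u x ↔ Reach ends (T \ {t}) u' x := by
  refine ⟨fun hux => ?_, fun hu'x hux => hT.1 t ht u u' htends (hux.trans hu'x.symm)⟩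
  rcases (hT.2 u x).of_sdiff_singleton_or htends with h | ⟨-, h⟩ | ⟨-, h⟩
  exacts [absurd h hux, h, absurd h hux]

theorem descendant_iff (hT : IsSpanningTree ends T) (ht : t ∈ T) (htends : ends t = s(u, u'))
    {r : V} (hparent : ¬ Reach ends (T \ {t}) u r) (a : V) :
    Descendant ends T r a u ↔ Reach ends (T \ {t}) u a := by
  have hside := hT.not_reach_sdiff_singleton_iff ht htends
  constructor
  · rintro (rfl | har)
    · exact Relation.ReflTransGen.refl
    by_contra hua
    have hau : ¬ Reach ends (T \ {t}) a u := fun h => hua h.symm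
    refine har ((((hside a).1 hua).symm.trans ((hside r).1 hparent)).avoid hau |>.mono ?_)
    exact fun f ⟨⟨hf, _⟩, hu⟩ => ⟨hf, hu⟩
  · refine fun hua => Or.inr fun har => hparent (hua.trans (har.mono ?_))
    rintro f ⟨hf, hu⟩
    refine ⟨hf, fun hft => hu ?_⟩
    rw [Set.mem_singleton_iff.mp hft, htends]
    exact Sym2.mem_mk_left u u'

theorem reach_exchange_iff (hT : IsSpanningTree ends T) (ht : t ∈ T)
    (htends : ends t = s(u, u')) {e : E} {v v' : V} (heends : ends e = s(v, v')) :
    Reach ends ((T \ {t}) ∪ {e}) u u' ↔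
      Xor (Reach ends (T \ {t}) u v) (Reach ends (T \ {t}) u v') := by
  have hside := hT.not_reach_sdiff_singleton_iff ht htends
  have hsub : T \ {t} ⊆ (T \ {t}) ∪ {e} := Set.subset_union_left
  have hvv' : Reach ends ((T \ {t}) ∪ {e}) v v' := Reach.single (Or.inr rfl) heends
  constructor
  · intro h
    rcases h.of_union_singleton heends with h | ⟨huv, hv'u'⟩ | ⟨huv', hvu'⟩
    · exact absurd h (hT.1 t ht u u' htends)
    · exact Or.inl ⟨huv, (hside v').2 hv'u'.symm⟩
    · exact Or.inr ⟨huv', (hside v).2 hvu'.symm⟩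
  · rintro (⟨huv, hv'⟩ | ⟨huv', hv⟩)
    · exact ((huv.mono hsub).trans hvv').trans (((hside v').1 hv').mono hsub).symm
    · exact ((huv'.mono hsub).trans hvv'.symm).trans (((hside v).1 hv).mono hsub).symm

theorem exchange (hT : IsSpanningTree ends T) (ht : t ∈ T) (htends : ends t = s(u, u'))
    {e : E} {v v' : V} (heends : ends e = s(v, v'))
    (hcycle : Reach ends ((T \ {t}) ∪ {e}) u u') :
    IsSpanningTree ends ((T \ {t}) ∪ {e}) := by
  have hsub : T \ {t} ⊆ (T \ {t}) ∪ {e} := Set.subset_union_left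
  have hvv' : ¬ Reach ends (T \ {t}) v v' := by
    intro hvv'
    rcases (hT.reach_exchange_iff ht htends heends).1 hcycle with ⟨huv, hv'⟩ | ⟨huv', hv⟩
    exacts [hv' (huv.trans hvv'), hv (huv'.trans hvv'.symm)]
  refine ⟨(hT.1.mono Set.sdiff_subset).union_singleton heends hvv', fun x y => ?_⟩
  rcases (hT.2 x y).of_sdiff_singleton_or htends with h | ⟨hxu, hu'y⟩ | ⟨hxu', huy⟩
  · exact h.mono hsub
  · exact ((hxu.mono hsub).trans hcycle).trans (hu'y.mono hsub)
  · exact ((hxu'.mono hsub).trans hcycle.symm).trans (huy.mono hsub)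

end IsSpanningTree

theorem exchange_tfae_general {V E : Type} (ends : E → Sym2 V)
    (T F : Set E) (hT : IsSpanningTree ends T)
    (hdisj : Disjoint T F)
    (r u u' v v' : V)
    (t : E) (ht : t ∈ T) (htends : ends t = s(u, u'))
    (hparent : ¬ Reach ends (T \ {t}) u r)
    (e : E) (he : e ∈ F) (heends : ends e = s(v, v'))
    (hnocyc : IsForest ends ((F ∪ {t}) \ {e})) :
    ((IsSpanningTree ends ((T \ {t}) ∪ {e}) ∧ IsForest ends ((F \ {e}) ∪ {t}))
        ↔ OnACycle ends (T ∪ {e}) t)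
      ∧ (OnACycle ends (T ∪ {e}) t
        ↔ ∃ a b : V, ends e = s(a, b) ∧
            Descendant ends T r a u ∧ ¬ Descendant ends T r b u) := by
  have hte : e ≠ t := fun h => Set.disjoint_left.mp hdisj ht (h ▸ he)
  have hcycle : OnACycle ends (T ∪ {e}) t ↔ Reach ends ((T \ {t}) ∪ {e}) u u' := by
    rw [onACycle_iff htends, Set.union_sdiff_distrib,
      Set.sdiff_singleton_eq_self (Set.mem_singleton_iff.not.2 hte.symm)]
    exact and_iff_right (Or.inl ht)
  rw [Set.union_sdiff_distrib, Set.sdiff_singleton_eq_self (Set.mem_singleton_iff.not.2 hte)]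
    at hnocyc
  refine ⟨⟨fun h => hcycle.2 (h.1.2 u u'),
    fun h => ⟨hT.exchange ht htends heends (hcycle.1 h), hnocyc⟩⟩, ?_⟩
  rw [hcycle, hT.reach_exchange_iff ht htends heends, heends,
    Sym2.exists_mk_eq_and_not_iff_xor]
  simp only [hT.descendant_iff ht htends hparent]

/-- **The exchange lemma.**  Let `T` be a spanning tree of `G` and `F` a forest on
`V(G)` edge-disjoint from `T`, let `u ≠ r`, let `u'` be the parent of `u` in `T`
(realized by the edge `t ∈ T`), and let `e = vv' ∈ F` be such that `(F + uu') − e`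
contains no cycle.  Then the following are equivalent:
(a) `(T − uu') + e` is a spanning tree of `G` and `(F − e) + uu'` is a forest;
(b) the edge `uu'` lies in the unique cycle of `T + e`;
(c) up to relabelling `v` as `v'`, `v` is a descendant of `u` in `T` and `v'` is not. -/
theorem exchange_tfae {V E : Type} [Fintype V] [Fintype E] (ends : E → Sym2 V)
    (hloop : Loopless ends)
    (T F : Set E) (hT : IsSpanningTree ends T) (hF : IsForest ends F)
    (hdisj : Disjoint T F)
    (r u u' v v' : V) (hur : u ≠ r)
    (t : E) (ht : t ∈ T) (htends : ends t = s(u, u'))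
    (hparent : ¬ Reach ends (T \ {t}) u r)
    (e : E) (he : e ∈ F) (heends : ends e = s(v, v'))
    (hnocyc : IsForest ends ((F ∪ {t}) \ {e})) :
    ((IsSpanningTree ends ((T \ {t}) ∪ {e}) ∧ IsForest ends ((F \ {e}) ∪ {t}))
        ↔ OnACycle ends (T ∪ {e}) t)
      ∧ (OnACycle ends (T ∪ {e}) t
        ↔ ∃ a b : V, ends e = s(a, b) ∧
            Descendant ends T r a u ∧ ¬ Descendant ends T r b u) :=
  exchange_tfae_general ends T F hT hdisj r u u' v v' t ht htends hparent e he heends hnocyc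
end

section
/- Suppose there is a function f : 𝒞 → 𝒦 such that for every K ∈ 𝒦, (e(K) + Σ_{C ∈ f⁻¹(K)} e(C)) / (v(K) + Σ_{C ∈ f⁻¹(K)} v(C)) ≥ d/(d+k+1). Then the exploration subgraph H = H_{𝒯*} satisfies (k+1)(k+d)·v(H) − (k+d+1)·e(H) − k² < 0; in particular, G is not (k,d)-sparse. -/
/-!
Multigraphs are modelled by a finite vertex type `V`, a finite edge-index type `E`
and an incidence map `ends : E → Sym2 V` giving the two endpoints of each edge;
`Loopless` says no edge is a loop.  Parallel edges are allowed.
-/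

open Classical

/-- `G` is a vertex-minimal counterexample: it is loopless, `(k,d)`-sparse, has no
`(k+1)`-overfull subgraph and admits no good `(k,d)`-decomposition, while every
loopless graph with fewer vertices that is `(k,d)`-sparse and has no `(k+1)`-overfull
subgraph admits a good `(k,d)`-decomposition. -/
def MinimalCounterexample {V E : Type} [Fintype V] (k d : ℕ) (ends : E → Sym2 V) : Prop :=
  Loopless ends ∧ Sparse k d ends ∧ NoOverfull k ends ∧ ¬ GoodDecomp k d ends ∧
  ∀ (V' E' : Type) [Fintype V'] [Fintype E'] (ends' : E' → Sym2 V'),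
    Loopless ends' → Fintype.card V' < Fintype.card V →
    Sparse k d ends' → NoOverfull k ends' → GoodDecomp k d ends'

/-- A decomposition of the edge set into `k` spanning trees (the `blue` forests,
indexed by `Fin k`) and one further forest (the `red` forest). -/
structure STDecomp (k : ℕ) {V E : Type} (ends : E → Sym2 V) : Type where
  col : E → Option (Fin k)
  tree : ∀ b : Fin k, IsSpanningTree ends {e | col e = some b}
  forest : IsForest ends {e | col e = none}

/-- The edge set of the red forest `F` of the decomposition. -/
def STDecomp.red {k : ℕ} {V E : Type} {ends : E → Sym2 V} (D : STDecomp k ends) : Set E :=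
  {e | D.col e = none}

/-- The edge set of the `b`-th blue spanning tree `T_b` of the decomposition. -/
def STDecomp.blue {k : ℕ} {V E : Type} {ends : E → Sym2 V} (D : STDecomp k ends)
    (b : Fin k) : Set E :=
  {e | D.col e = some b}

/-- The set of connected components (given by their vertex sets) of the spanning
subgraph with edge set `A`. -/
def comps {V E : Type} (ends : E → Sym2 V) (A : Set E) : Set (Set V) :=
  {S | ∃ v, S = compV ends A v}

/-- The number of edges of `A` lying inside the vertex set `S`. -/
noncomputable def eIn {V E : Type} (ends : E → Sym2 V) (A : Set E) (S : Set V) : ℕ :=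
  {e | e ∈ A ∧ ∀ w ∈ ends e, w ∈ S}.ncard

/-- `ρ_i(F)`: the number of components of the forest `A` having exactly `i` edges. -/
noncomputable def rhoCnt {V E : Type} (ends : E → Sym2 V) (A : Set E) (i : ℕ) : ℕ :=
  {S | S ∈ comps ends A ∧ eIn ends A S = i}.ncard

/-- `ρ(A) < ρ(A')` in the lexicographic order on `(ρ_{v(G)−1}, …, ρ_{d+1})`
(indices above `v(G)−1` are automatically `0` for forests). -/
def RhoLt {V E : Type} (d : ℕ) (ends : E → Sym2 V) (A A' : Set E) : Prop :=
  ∃ j, d + 1 ≤ j ∧ rhoCnt ends A j < rhoCnt ends A' j ∧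
    ∀ i, j < i → rhoCnt ends A i = rhoCnt ends A' i

/-- `ρ(A) = ρ(A')` as tuples `(ρ_{v(G)−1}, …, ρ_{d+1})`. -/
def SameRho {V E : Type} (d : ℕ) (ends : E → Sym2 V) (A A' : Set E) : Prop :=
  ∀ i, d + 1 ≤ i → rhoCnt ends A i = rhoCnt ends A' i

/-- Degree of `v` in the spanning subgraph with edge set `A` (no loops are present). -/
noncomputable def degIn {V E : Type} (ends : E → Sym2 V) (A : Set E) (v : V) : ℕ :=
  {e | e ∈ A ∧ v ∈ ends e}.ncard

/-- There are two edge-disjoint paths of length (at least) `2` in `A` starting at `r`. -/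
def TwoPaths {V E : Type} (ends : E → Sym2 V) (A : Set E) (r : V) : Prop :=
  ∃ e1 f1 e2 f2, e1 ∈ A ∧ f1 ∈ A ∧ e2 ∈ A ∧ f2 ∈ A ∧
    e1 ≠ e2 ∧ e1 ≠ f2 ∧ f1 ≠ e2 ∧ f1 ≠ f2 ∧
    (∃ p q, ends e1 = s(r, p) ∧ ends f1 = s(p, q) ∧ e1 ≠ f1) ∧
    (∃ p q, ends e2 = s(r, p) ∧ ends f2 = s(p, q) ∧ e2 ≠ f2)

/-- The blue arc `(x, x')` of the spanning tree `T` (all arcs being directed towards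
the root `r`): there is an edge `t ∈ T` joining `x` to `x'` such that `x'` is the
parent of `x`, i.e. removing `t` disconnects `x` from `r` in `T`. -/
def BlueArc {V E : Type} (ends : E → Sym2 V) (r : V) (T : Set E) (x x' : V) : Prop :=
  ∃ t ∈ T, ends t = s(x, x') ∧ ¬ Reach ends (T \ {t}) x r

/-- There is a blue directed path from `x` to `y` in the spanning tree `T` rooted at `r`. -/
def BlueReach {V E : Type} (ends : E → Sym2 V) (r : V) (T : Set E) (x y : V) : Prop :=
  Relation.ReflTransGen (BlueArc ends r T) x y

/-- One exploration step: either a red edge between `a` and `b`, or a blue arc `(a, b)`. -/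
def ExplStep {V E : Type} {k : ℕ} (ends : E → Sym2 V) (r : V) (D : STDecomp k ends)
    (a b : V) : Prop :=
  (∃ t ∈ D.red, ends t = s(a, b)) ∨ ∃ i : Fin k, BlueArc ends r (D.blue i) a b

/-- The vertex set of the exploration subgraph `H_𝒯`. -/
def ExplVerts {V E : Type} {k : ℕ} (ends : E → Sym2 V) (r : V) (D : STDecomp k ends) :
    Set V :=
  {v | Relation.ReflTransGen (ExplStep ends r D) r v}

/-- `S` is (the vertex set of) a red component of the exploration subgraph `H_𝒯`. -/
def IsRedCompH {V E : Type} {k : ℕ} (ends : E → Sym2 V) (r : V) (D : STDecomp k ends)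
    (S : Set V) : Prop :=
  S ∈ comps ends D.red ∧ S ⊆ ExplVerts ends r D

/-- `L` is a legal order for the decomposition `D`: a duplicate-free list of all red
components of `H_D` starting with `R*`, in which every later component receives a blue
arc from some earlier component. -/
def IsLegalOrder {V E : Type} {k : ℕ} (ends : E → Sym2 V) (r : V) (RStar : Set V)
    (D : STDecomp k ends) (L : List (Set V)) : Prop :=
  L.head? = some RStar ∧ L.Nodup ∧
  (∀ S : Set V, S ∈ L ↔ IsRedCompH ends r D S) ∧
  ∀ j, 0 < j → j < L.length → ∃ i, i < j ∧
    ∃ x ∈ L.getD i ∅, ∃ y ∈ L.getD j ∅, ∃ b : Fin k, BlueArc ends r (D.blue b) x y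

/-- Lexicographic comparison of sequences of naturals, padding with zeros. -/
def SeqLt (l l' : List ℕ) : Prop :=
  ∃ j, l.getD j 0 < l'.getD j 0 ∧ ∀ i, i < j → l.getD i 0 = l'.getD i 0

/-- `C` is a child of `K` generated by the chosen blue arc `(x, y)` of the tree `b`
(with respect to the legal order `σ` and the fixed choice `pIdx, aX, aY, aB` of
parent indices and generating arcs). -/
def IsChildGen {V : Type} {k : ℕ} (σ : List (Set V)) (pIdx : ℕ → ℕ) (aX aY : ℕ → V)
    (aB : ℕ → Fin k) (K C : Set V) (x y : V) (b : Fin k) : Prop :=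
  ∃ j, 0 < j ∧ j < σ.length ∧ σ.getD j ∅ = C ∧ σ.getD (pIdx j) ∅ = K ∧
    aX j = x ∧ aY j = y ∧ aB j = b

/-- `C` is a child of `K` with respect to `σ` and the fixed choice of generating arcs. -/
def IsChild {V : Type} {k : ℕ} (σ : List (Set V)) (pIdx : ℕ → ℕ) (aX aY : ℕ → V)
    (aB : ℕ → Fin k) (K C : Set V) : Prop :=
  ∃ x y b, IsChildGen σ pIdx aX aY aB K C x y b

/-- A small component: at most one red edge. -/
def IsSmall {V E : Type} (ends : E → Sym2 V) (A : Set E) (S : Set V) : Prop :=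
  eIn ends A S ≤ 1

/-- `L` is an interesting neighbour of `K` generated by the blue arc `(x, x')` of the
blue tree `b`:  `L ≠ K` is a red component of `H`, `x ∈ K`, `x' ≠ r` lies in `L` and has
exactly one incident red edge `x'n`, the red component of the blue parent `x''` of `x'`
has no edge and is a child of `L`, and the tree `b` has a directed path from `n` to `x`. -/
def InterestingNbr {V E : Type} {k : ℕ} (ends : E → Sym2 V) (r : V) (D : STDecomp k ends)
    (σ : List (Set V)) (pIdx : ℕ → ℕ) (aX aY : ℕ → V) (aB : ℕ → Fin k)
    (K L : Set V) (b : Fin k) (x x' : V) : Prop :=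
  IsRedCompH ends r D L ∧ L ≠ K ∧ x ∈ K ∧
  BlueArc ends r (D.blue b) x x' ∧ x' ≠ r ∧ x' ∈ L ∧
  (∃! f, f ∈ D.red ∧ x' ∈ ends f) ∧
  ∃ n x'' : V, (∃ f ∈ D.red, ends f = s(x', n)) ∧
    BlueArc ends r (D.blue b) x' x'' ∧
    eIn ends D.red (compV ends D.red x'') = 0 ∧
    IsChild σ pIdx aX aY aB L (compV ends D.red x'') ∧
    BlueReach ends r (D.blue b) n x

/-- `C` is a relevant neighbour of `K` generated by `(x, x')` of the blue tree `b`: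
either a small child of `K` generated by the chosen arc `(x, x')` of tree `b`,
or an interesting neighbour of `K` generated by `(x, x')` of tree `b`. -/
def RelevantNbr {V E : Type} {k : ℕ} (ends : E → Sym2 V) (r : V) (D : STDecomp k ends)
    (σ : List (Set V)) (pIdx : ℕ → ℕ) (aX aY : ℕ → V) (aB : ℕ → Fin k)
    (K C : Set V) (b : Fin k) (x x' : V) : Prop :=
  (IsChildGen σ pIdx aX aY aB K C x x' b ∧ IsSmall ends D.red C) ∨
  InterestingNbr ends r D σ pIdx aX aY aB K C b x x'

/-- `𝒞`: the set of small red components of the exploration subgraph. -/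
def SmallComps {V E : Type} {k : ℕ} (ends : E → Sym2 V) (r : V) (D : STDecomp k ends) :
    Set (Set V) :=
  {S | IsRedCompH ends r D S ∧ IsSmall ends D.red S}

/-- `𝒦`: the set of red components of the exploration subgraph other than `R*`
that are not small. -/
def BigComps {V E : Type} {k : ℕ} (ends : E → Sym2 V) (r : V) (RStar : Set V)
    (D : STDecomp k ends) : Set (Set V) :=
  {S | IsRedCompH ends r D S ∧ S ≠ RStar ∧ ¬ IsSmall ends D.red S}


section AuxiliaryLemmas

variable {V E : Type}

lemma reach_mono {ends : E → Sym2 V} {A B : Set E} (h : A ⊆ B) {x y : V}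
    (hxy : Reach ends A x y) : Reach ends B x y := by
  induction hxy with
  | refl => exact Relation.ReflTransGen.refl
  | tail _ h2 ih =>
    obtain ⟨e, he, hee⟩ := h2
    exact ih.tail ⟨e, h he, hee⟩

lemma reach_symm {ends : E → Sym2 V} {A : Set E} {x y : V}
    (hxy : Reach ends A x y) : Reach ends A y x := by
  induction hxy with
  | refl => exact Relation.ReflTransGen.refl
  | tail _ h2 ih =>
    obtain ⟨e, he, hee⟩ := h2
    exact Relation.ReflTransGen.head ⟨e, he, hee.trans (Sym2.eq_swap)⟩ ih

lemma reach_split {ends : E → Sym2 V} {A : Set E} {x y : V} (t : E) {a b : V}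
    (ht : ends t = s(a, b)) (hxy : Reach ends A x y) :
    Reach ends (A \ {t}) x y ∨
      (Reach ends (A \ {t}) x a ∧ Reach ends (A \ {t}) b y) ∨
      (Reach ends (A \ {t}) x b ∧ Reach ends (A \ {t}) a y) := by
  induction hxy with
  | refl => exact Or.inl Relation.ReflTransGen.refl
  | @tail p q hxp hstep ih =>
    obtain ⟨e, he, hee⟩ := hstep
    by_cases het : e = t
    · subst het
      rcases Sym2.eq_iff.mp (hee.symm.trans ht) with ⟨rfl, rfl⟩ | ⟨rfl, rfl⟩
      · rcases ih with h | ⟨h1, h2⟩ | ⟨h1, h2⟩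
        · exact Or.inr (Or.inl ⟨h, Relation.ReflTransGen.refl⟩)
        · exact Or.inr (Or.inl ⟨h1, Relation.ReflTransGen.refl⟩)
        · exact Or.inl h1
      · rcases ih with h | ⟨h1, h2⟩ | ⟨h1, h2⟩
        · exact Or.inr (Or.inr ⟨h, Relation.ReflTransGen.refl⟩)
        · exact Or.inl h1
        · exact Or.inr (Or.inr ⟨h1, Relation.ReflTransGen.refl⟩)
    · have hstep' : ∃ e' ∈ A \ {t}, ends e' = s(p, q) :=
        ⟨e, ⟨he, by simp [het]⟩, hee⟩
      rcases ih with h | ⟨h1, h2⟩ | ⟨h1, h2⟩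
      · exact Or.inl (h.tail hstep')
      · exact Or.inr (Or.inl ⟨h1, h2.tail hstep'⟩)
      · exact Or.inr (Or.inr ⟨h1, h2.tail hstep'⟩)

lemma forest_anti {ends : E → Sym2 V} {A B : Set E} (hF : IsForest ends A)
    (hBA : B ⊆ A) : IsForest ends B := by
  intro e he x y hxy hr
  exact hF e (hBA he) x y hxy (reach_mono (Set.diff_subset_diff_left hBA) hr)

lemma reach_other_side {ends : E → Sym2 V} {T : Set E} {t : E} {v w r : V}
    (hvr : Reach ends T v r) (ht : ends t = s(v, w))
    (hnr : ¬ Reach ends (T \ {t}) v r) : Reach ends (T \ {t}) w r := by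
  rcases reach_split t ht hvr with h | ⟨h1, h2⟩ | ⟨h1, h2⟩
  · exact absurd h hnr
  · exact h2
  · exact absurd h2 hnr

lemma exists_parent [Fintype E] {ends : E → Sym2 V} {T : Set E} (hF : IsForest ends T)
    {v r : V} (hvr : Reach ends T v r) (hne : v ≠ r) :
    ∃ t ∈ T, ∃ w, ends t = s(v, w) ∧ ¬ Reach ends (T \ {t}) v r := by
  have main : ∀ n : ℕ, ∀ T : Set E, T.ncard ≤ n → IsForest ends T → ∀ v : V,
      Reach ends T v r → v ≠ r →
      ∃ t ∈ T, ∃ w, ends t = s(v, w) ∧ ¬ Reach ends (T \ {t}) v r := by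
    intro n
    induction n with
    | zero =>
      intro T hcard hFT v hvrT hneT
      rcases Relation.ReflTransGen.cases_head hvrT with h | ⟨u, ⟨e, he, _⟩, _⟩
      · exact absurd h hneT
      · have hT : T = ∅ := (Set.ncard_eq_zero (Set.toFinite T)).mp (by omega)
        rw [hT] at he
        exact absurd he (Set.notMem_empty e)
    | succ n ih =>
      intro T hcard hFT v hvrT hneT
      rcases Relation.ReflTransGen.cases_head hvrT with h | ⟨u, ⟨t0, ht0, he0⟩, hur⟩
      · exact absurd h hneT
      by_cases hc : Reach ends (T \ {t0}) v r
      · have hforest' : IsForest ends (T \ {t0}) := forest_anti hFT Set.diff_subset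
        have hlt : (T \ {t0}).ncard < T.ncard :=
          Set.ncard_lt_ncard (Set.sdiff_singleton_ssubset.mpr ht0) (Set.toFinite T)
        obtain ⟨t, ht, w, hw, hnr⟩ := ih (T \ {t0}) (by omega) hforest' v hc hneT
        refine ⟨t, ht.1, w, hw, ?_⟩
        intro hreach
        have hcomm : (T \ {t}) \ {t0} = (T \ {t0}) \ {t} := Set.diff_diff_comm
        rcases reach_split t0 he0 hreach with h | ⟨h1, h2⟩ | ⟨h1, h2⟩
        · rw [hcomm] at h
          exact hnr h
        · rw [hcomm] at h2
          have h2' : Reach ends (T \ {t0}) u r := reach_mono Set.diff_subset h2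
          have : Reach ends (T \ {t0}) v u := hc.trans (reach_symm h2')
          exact hFT t0 ht0 v u he0 this
        · rw [hcomm] at h1
          have h1' : Reach ends (T \ {t0}) v u := reach_mono Set.diff_subset h1
          exact hFT t0 ht0 v u he0 h1'
      · exact ⟨t0, ht0, u, he0, hc⟩
  exact main T.ncard T le_rfl hF v hvr hne

lemma side_ssubset {ends : E → Sym2 V} {T : Set E} {t t' : E} {v w r : V}
    (hvr : Reach ends T v r) (ht : ends t = s(v, w))
    (hnv : ¬ Reach ends (T \ {t}) v r) (hnw : ¬ Reach ends (T \ {t'}) w r) :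
    compV ends (T \ {t'}) r ⊂ compV ends (T \ {t}) r := by
  have hsub : compV ends (T \ {t'}) r ⊆ compV ends (T \ {t}) r := by
    intro z hz
    have hz' : Reach ends (T \ {t'}) r z := hz
    by_contra hcon
    rcases reach_split t ht hz' with h | ⟨h1, h2⟩ | ⟨h1, h2⟩
    · exact hcon (reach_mono (Set.diff_subset_diff_left Set.diff_subset) h)
    · have : Reach ends (T \ {t}) r v :=
        reach_mono (Set.diff_subset_diff_left Set.diff_subset)
          (by rw [Set.diff_diff_comm] at h1 ⊢; exact h1)
      exact hnv (reach_symm this)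
    · have : Reach ends (T \ {t'}) r w := reach_mono Set.diff_subset h1
      exact hnw (reach_symm this)
  have hwmem : w ∈ compV ends (T \ {t}) r :=
    reach_symm (reach_other_side hvr ht hnv)
  have hwnot : w ∉ compV ends (T \ {t'}) r := fun h => hnw (reach_symm h)
  refine ssubset_of_subset_of_ne hsub (fun heq => hwnot ?_)
  rw [heq]
  exact hwmem

lemma mem_compV_self {ends : E → Sym2 V} {A : Set E} (v : V) :
    v ∈ compV ends A v := Relation.ReflTransGen.refl

lemma compV_eq_of_reach {ends : E → Sym2 V} {A : Set E} {u v : V}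
    (h : Reach ends A u v) : compV ends A u = compV ends A v := by
  ext w
  constructor
  · intro hw
    exact (reach_symm h).trans hw
  · intro hw
    exact h.trans hw

lemma comp_eq_of_mem {ends : E → Sym2 V} {A : Set E} {S : Set V} {v : V}
    (hS : S ∈ comps ends A) (hv : v ∈ S) : S = compV ends A v := by
  obtain ⟨u, rfl⟩ := hS
  exact compV_eq_of_reach hv

lemma red_closure {k : ℕ} {ends : E → Sym2 V} {r : V} (D : STDecomp k ends) {v w : V}
    (hv : v ∈ ExplVerts ends r D) (hr : Reach ends D.red v w) :
    w ∈ ExplVerts ends r D := by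
  induction hr with
  | refl => exact hv
  | tail _ h2 ih =>
    obtain ⟨e, he, hee⟩ := h2
    exact Relation.ReflTransGen.tail ih (Or.inl ⟨e, he, hee⟩)

lemma reach_in_comp {ends : E → Sym2 V} {A : Set E} {u x y : V}
    (hux : Reach ends A u x) (hxy : Reach ends A x y) :
    Reach ends {e | e ∈ A ∧ ∀ w ∈ ends e, Reach ends A u w} x y := by
  induction hxy with
  | refl => exact Relation.ReflTransGen.refl
  | @tail p q h1 h2 ih =>
    obtain ⟨e, he, hee⟩ := h2
    have hup : Reach ends A u p := hux.trans h1
    have hq : e ∈ {e | e ∈ A ∧ ∀ w ∈ ends e, Reach ends A u w} := by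
      refine ⟨he, fun w hw => ?_⟩
      rw [hee] at hw
      rcases Sym2.mem_iff.mp hw with rfl | rfl
      · exact hup
      · exact hup.tail ⟨e, he, hee⟩
    exact ih.tail ⟨e, hq, hee⟩

lemma spine {k : ℕ} [Fintype V] [Fintype E] {ends : E → Sym2 V} {r : V}
    (D : STDecomp k ends) (b : Fin k) {v : V} (hv : v ∈ ExplVerts ends r D) :
    Reach ends {e | D.col e = some b ∧ ∀ w ∈ ends e, w ∈ ExplVerts ends r D} v r := by
  have main : ∀ n : ℕ, ∀ v : V, v ∈ ExplVerts ends r D →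
      (∀ t ∈ D.blue b, ¬ Reach ends (D.blue b \ {t}) v r →
        (compV ends (D.blue b \ {t}) r).ncard ≤ n) →
      Reach ends {e | D.col e = some b ∧ ∀ w ∈ ends e, w ∈ ExplVerts ends r D} v r := by
    intro n
    induction n with
    | zero =>
      intro v hvH hmeas
      by_cases hvr : v = r
      · subst hvr; exact Relation.ReflTransGen.refl
      · have htree : IsSpanningTree ends (D.blue b) := D.tree b
        obtain ⟨t, ht, w, hw, hnr⟩ :=
          exists_parent htree.1 (htree.2 v r) hvr
        have h0 := hmeas t ht hnr
        have h1 : r ∈ compV ends (D.blue b \ {t}) r := mem_compV_self r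
        have h2 : 0 < (compV ends (D.blue b \ {t}) r).ncard :=
          (Set.ncard_pos (Set.toFinite _)).mpr ⟨r, h1⟩
        omega
    | succ n ih =>
      intro v hvH hmeas
      by_cases hvr : v = r
      · subst hvr; exact Relation.ReflTransGen.refl
      · have htree : IsSpanningTree ends (D.blue b) := D.tree b
        obtain ⟨t, ht, w, hw, hnr⟩ :=
          exists_parent htree.1 (htree.2 v r) hvr
        have hwH : w ∈ ExplVerts ends r D :=
          Relation.ReflTransGen.tail hvH (Or.inr ⟨b, t, ht, hw, hnr⟩)
        have htB : t ∈ {e | D.col e = some b ∧ ∀ w' ∈ ends e, w' ∈ ExplVerts ends r D} := by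
          refine ⟨ht, fun w' hw' => ?_⟩
          rw [hw] at hw'
          rcases Sym2.mem_iff.mp hw' with rfl | rfl
          · exact hvH
          · exact hwH
        have hmeas' : ∀ t' ∈ D.blue b, ¬ Reach ends (D.blue b \ {t'}) w r →
            (compV ends (D.blue b \ {t'}) r).ncard ≤ n := by
          intro t' ht' hnr'
          have hss := side_ssubset (htree.2 v r) hw hnr hnr'
          have hlt := Set.ncard_lt_ncard hss (Set.toFinite _)
          have := hmeas t ht hnr
          omega
        exact Relation.ReflTransGen.head ⟨t, htB, hw⟩ (ih w hwH hmeas')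
  refine main (Fintype.card V) v hv (fun t ht hnr => ?_)
  calc (compV ends (D.blue b \ {t}) r).ncard
      ≤ (Set.univ : Set V).ncard := Set.ncard_le_ncard (Set.subset_univ _) (Set.toFinite _)
    _ = Fintype.card V := by rw [Set.ncard_univ, Nat.card_eq_fintype_card]

lemma card_le_of_connected [Fintype V] [Fintype E] {ends : E → Sym2 V} {B : Set E}
    {S : Set V} {r : V} (hF : IsForest ends B) (h : ∀ v ∈ S, Reach ends B v r) :
    S.ncard ≤ B.ncard + 1 := by
  classical
  have hex : ∀ v ∈ S \ {r}, ∃ t, t ∈ B ∧ ∃ w, ends t = s(v, w) ∧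
      ¬ Reach ends (B \ {t}) v r := by
    intro v hv
    obtain ⟨t, ht, w, hw, hn⟩ := exists_parent hF (h v hv.1) (by simpa using hv.2)
    exact ⟨t, ht, w, hw, hn⟩
  by_cases hSr : S \ {r} = ∅
  · have hsub : S ⊆ {r} := by
      intro x hx
      by_contra hh
      exact (Set.eq_empty_iff_forall_notMem.mp hSr x) ⟨hx, hh⟩
    have := Set.ncard_le_ncard hsub (Set.toFinite _)
    simp only [Set.ncard_singleton] at this
    omega
  obtain ⟨v0, hv0⟩ := Set.nonempty_iff_ne_empty.mpr hSr
  obtain ⟨t0, ht0, -⟩ := hex v0 hv0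
  haveI : Nonempty E := ⟨t0⟩
  choose! g hgB hgw using hex
  have hinj : Set.InjOn g (S \ {r}) := by
    intro x hx y hy hxy
    obtain ⟨wx, hwx, hnx⟩ := hgw x hx
    obtain ⟨wy, hwy, hny⟩ := hgw y hy
    rw [hxy] at hwx
    rcases Sym2.eq_iff.mp (hwx.symm.trans hwy) with ⟨h1, _⟩ | ⟨h1, _⟩
    · exact h1
    · exfalso
      have hside := reach_other_side (h y hy.1) hwy hny
      rw [← h1] at hside
      rw [← hxy] at hside
      exact hnx hside
  have hcard1 : (S \ {r}).ncard ≤ B.ncard :=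
    Set.ncard_le_ncard_of_injOn g (fun v hv => hgB v hv) hinj (Set.toFinite B)
  have hsub : S ⊆ insert r (S \ {r}) := by
    intro x hx
    by_cases hxr : x = r
    · simp [hxr]
    · exact Set.mem_insert_of_mem _ ⟨hx, hxr⟩
  have hcard2 : S.ncard ≤ (insert r (S \ {r})).ncard :=
    Set.ncard_le_ncard hsub (Set.toFinite _)
  have hcard3 := Set.ncard_insert_le r (S \ {r})
  omega

end AuxiliaryLemmas

theorem betaLtZero (k d : ℕ) (hk : 1 ≤ k) (hd1 : k + 1 < d) (hd2 : d ≤ 2 * (k + 1))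
    {V E : Type} [Fintype V] [Fintype E] (ends : E → Sym2 V)
    -- `G` is a vertex-minimal counterexample
    (hG : MinimalCounterexample k d ends)
    -- the fixed decomposition `𝒯* = (T_1, …, T_k, F)`, the component `R*` and the root `r`
    (D : STDecomp k ends) (RStar : Set V) (r : V)
    -- `R*` is a connected component of the red forest `F` (so `𝒯* ∈ ℱ`)
    (hRComp : RStar ∈ comps ends D.red)
    -- `F` attains the minimum `ρ*` over all decompositions into `k` spanning trees
    -- and a forest (so `𝒯* ∈ ℱ*`)
    (hRhoMin : ∀ D' : STDecomp k ends, ¬ RhoLt d ends D'.red D.red)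
    -- `R*` has at least `d + 1` edges
    (hRBig : d + 1 ≤ eIn ends D.red RStar)
    -- `r ∈ R*` has degree at least 3 in `R*` or, if no vertex of `R*` has degree at
    -- least 3, two edge-disjoint paths of length at least 2 in `R*` start at `r`
    (hrR : r ∈ RStar)
    (hrDeg : 3 ≤ degIn ends D.red r ∨
      ((∀ v ∈ RStar, ¬ 3 ≤ degIn ends D.red v) ∧ TwoPaths ends D.red r))
    -- the fixed legal order `σ*` for `𝒯*`
    (σ : List (Set V)) (hσ : IsLegalOrder ends r RStar D σ)
    -- the fixed choice of generating arcs: component `σ_j` is a child of the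
    -- component `σ_{pIdx j}` generated by the blue arc `(aX j, aY j)` of tree `aB j`
    (pIdx : ℕ → ℕ) (aX aY : ℕ → V) (aB : ℕ → Fin k)
    (hArcs : ∀ j, 0 < j → j < σ.length →
      pIdx j < j ∧ aX j ∈ σ.getD (pIdx j) ∅ ∧ aY j ∈ σ.getD j ∅ ∧
      BlueArc ends r (D.blue (aB j)) (aX j) (aY j))
    -- no decomposition in `ℱ*` admits a legal order strictly smaller than `σ*`
    (hσMin : ∀ D' : STDecomp k ends, RStar ∈ comps ends D'.red →
      SameRho d ends D'.red D.red → ∀ L', IsLegalOrder ends r RStar D' L' →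
      ¬ SeqLt (L'.map (eIn ends D'.red)) (σ.map (eIn ends D.red)))
    -- suppose there is a function `f : 𝒞 → 𝒦` as in Lemma `densityOfKC`
    (hf : ∃ f : Set V → Set V,
      (∀ C ∈ SmallComps ends r D, f C ∈ BigComps ends r RStar D) ∧
      ∀ K ∈ BigComps ends r RStar D,
        (d : ℚ) / ((d : ℚ) + (k : ℚ) + 1) ≤
          ((eIn ends D.red K : ℚ) +
              ∑ᶠ C ∈ {C | C ∈ SmallComps ends r D ∧ f C = K}, (eIn ends D.red C : ℚ)) /
          ((K.ncard : ℚ) +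
              ∑ᶠ C ∈ {C | C ∈ SmallComps ends r D ∧ f C = K}, (C.ncard : ℚ))) :
    -- then the exploration subgraph `H = H_{𝒯*}` satisfies
    -- `(k+1)(k+d)·v(H) − (k+d+1)·e(H) − k² < 0`, and `G` is not `(k,d)`-sparse
    ((k : ℤ) + 1) * ((k : ℤ) + (d : ℤ)) * ((ExplVerts ends r D).ncard : ℤ)
        - ((k : ℤ) + (d : ℤ) + 1) *
            (({e | ∀ w ∈ ends e, w ∈ ExplVerts ends r D} : Set E).ncard : ℤ)
        - (k : ℤ) ^ 2 < 0
      ∧ ¬ Sparse k d ends := by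
  classical
  obtain ⟨f, hf1, hf2⟩ := hf
  have hrH : r ∈ ExplVerts ends r D := Relation.ReflTransGen.refl
  have hd3 : 3 ≤ d := by omega
  have hSfin : {S : Set V | IsRedCompH ends r D S}.Finite := Set.toFinite _
  set 𝒮 : Finset (Set V) := hSfin.toFinset with h𝒮
  have hmem𝒮 : ∀ S : Set V, S ∈ 𝒮 ↔ IsRedCompH ends r D S := fun S => hSfin.mem_toFinset
  have hcomp : ∀ v ∈ ExplVerts ends r D, IsRedCompH ends r D (compV ends D.red v) := by
    intro v hv
    exact ⟨⟨v, rfl⟩, fun w hw => red_closure D hv hw⟩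
  have hcompeq : ∀ S ∈ 𝒮, ∀ v ∈ S, S = compV ends D.red v := by
    intro S hS v hv
    exact comp_eq_of_mem ((hmem𝒮 S).mp hS).1 hv
  -- vertex count over components
  have hHcard : (ExplVerts ends r D).ncard = ∑ S ∈ 𝒮, S.ncard := by
    have hU : 𝒮.biUnion (fun S => (Set.toFinite S).toFinset)
        = (Set.toFinite (ExplVerts ends r D)).toFinset := by
      ext v
      simp only [Finset.mem_biUnion, Set.Finite.mem_toFinset]
      constructor
      · rintro ⟨S, hS, hvS⟩
        exact ((hmem𝒮 S).mp hS).2 hvS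
      · intro hv
        exact ⟨compV ends D.red v, (hmem𝒮 _).mpr (hcomp v hv), mem_compV_self v⟩
    have hdisj : ∀ S ∈ 𝒮, ∀ S' ∈ 𝒮, S ≠ S' →
        Disjoint ((Set.toFinite S).toFinset) ((Set.toFinite S').toFinset) := by
      intro S hS S' hS' hne
      rw [Finset.disjoint_left]
      intro a haS haS'
      rw [Set.Finite.mem_toFinset] at haS haS'
      exact hne ((hcompeq S hS a haS).trans ((hcompeq S' hS' a haS').symm))
    rw [Set.ncard_eq_toFinset_card _ (Set.toFinite _), ← hU, Finset.card_biUnion hdisj]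
    exact Finset.sum_congr rfl fun S _ => (Set.ncard_eq_toFinset_card _ (Set.toFinite S)).symm
  have hends : ∀ e : E, ∃ a b2 : V, ends e = s(a, b2) := fun e =>
    Sym2.ind (f := fun z => ∃ a b2, z = s(a, b2)) (fun a b2 => ⟨a, b2, rfl⟩) (ends e)
  -- red edge count over components
  have hRedCard : eIn ends D.red (ExplVerts ends r D) = ∑ S ∈ 𝒮, eIn ends D.red S := by
    have hU : 𝒮.biUnion (fun S => (Set.toFinite {e | e ∈ D.red ∧ ∀ w ∈ ends e, w ∈ S}).toFinset)
        = (Set.toFinite {e | e ∈ D.red ∧ ∀ w ∈ ends e, w ∈ ExplVerts ends r D}).toFinset := by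
      ext e
      simp only [Finset.mem_biUnion, Set.Finite.mem_toFinset, Set.mem_setOf_eq]
      constructor
      · rintro ⟨S, hS, he, hw⟩
        exact ⟨he, fun w hw' => ((hmem𝒮 S).mp hS).2 (hw w hw')⟩
      · rintro ⟨he, hw⟩
        obtain ⟨a, b2, hab⟩ := hends e
        have haH : a ∈ ExplVerts ends r D := hw a (by rw [hab]; exact Sym2.mem_mk_left a b2)
        refine ⟨compV ends D.red a, (hmem𝒮 _).mpr (hcomp a haH), he, ?_⟩
        intro w hw'
        rw [hab] at hw'
        rcases Sym2.mem_iff.mp hw' with h | h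
        · rw [h]
          exact mem_compV_self a
        · rw [h]
          exact Relation.ReflTransGen.single ⟨e, he, hab⟩
    have hdisj : ∀ S ∈ 𝒮, ∀ S' ∈ 𝒮, S ≠ S' →
        Disjoint ((Set.toFinite {e | e ∈ D.red ∧ ∀ w ∈ ends e, w ∈ S}).toFinset)
          ((Set.toFinite {e | e ∈ D.red ∧ ∀ w ∈ ends e, w ∈ S'}).toFinset) := by
      intro S hS S' hS' hne
      rw [Finset.disjoint_left]
      intro e heS heS'
      rw [Set.Finite.mem_toFinset] at heS heS'
      obtain ⟨a, b2, hab⟩ := hends e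
      have haS : a ∈ S := heS.2 a (by rw [hab]; exact Sym2.mem_mk_left a b2)
      have haS' : a ∈ S' := heS'.2 a (by rw [hab]; exact Sym2.mem_mk_left a b2)
      exact hne ((hcompeq S hS a haS).trans ((hcompeq S' hS' a haS').symm))
    unfold eIn
    rw [Set.ncard_eq_toFinset_card _ (Set.toFinite _), ← hU, Finset.card_biUnion hdisj]
    exact Finset.sum_congr rfl fun S _ => (Set.ncard_eq_toFinset_card _ (Set.toFinite _)).symm
  -- total edge count: red part plus blue parts
  have hmcard : ({e : E | ∀ w ∈ ends e, w ∈ ExplVerts ends r D}).ncard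
      = eIn ends D.red (ExplVerts ends r D)
        + ∑ b : Fin k,
            ({e : E | D.col e = some b ∧ ∀ w ∈ ends e, w ∈ ExplVerts ends r D}).ncard := by
    have hfib := Finset.card_eq_sum_card_fiberwise
      (s := (Set.toFinite {e : E | ∀ w ∈ ends e, w ∈ ExplVerts ends r D}).toFinset)
      (t := (Finset.univ : Finset (Option (Fin k)))) (f := fun e => D.col e)
      (fun x _ => Finset.mem_univ _)
    rw [Set.ncard_eq_toFinset_card _ (Set.toFinite _), hfib, Fintype.sum_option]
    congr 1
    · unfold eIn
      rw [Set.ncard_eq_toFinset_card _ (Set.toFinite _)]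
      congr 1
      ext e
      simp only [Finset.mem_filter, Set.Finite.mem_toFinset, Set.mem_setOf_eq, STDecomp.red]
      tauto
    · refine Finset.sum_congr rfl fun b _ => ?_
      rw [Set.ncard_eq_toFinset_card _ (Set.toFinite _)]
      congr 1
      ext e
      simp only [Finset.mem_filter, Set.Finite.mem_toFinset, Set.mem_setOf_eq]
      tauto
  -- each blue tree restricted to H spans H
  have hBble : ∀ b : Fin k, (ExplVerts ends r D).ncard
      ≤ ({e : E | D.col e = some b ∧ ∀ w ∈ ends e, w ∈ ExplVerts ends r D}).ncard + 1 := by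
    intro b
    have hsubT : {e : E | D.col e = some b ∧ ∀ w ∈ ends e, w ∈ ExplVerts ends r D} ⊆ D.blue b :=
      fun e he => he.1
    exact card_le_of_connected (forest_anti (D.tree b).1 hsubT) (fun v hv => spine D b hv)
  -- facts about RStar
  have hReq : RStar = compV ends D.red r := comp_eq_of_mem hRComp hrR
  have hRsub : RStar ⊆ ExplVerts ends r D := by
    intro v hv
    rw [hReq] at hv
    exact red_closure D hrH hv
  have hRmem : RStar ∈ 𝒮 := (hmem𝒮 _).mpr ⟨hRComp, hRsub⟩
  have hRcard : RStar.ncard ≤ eIn ends D.red RStar + 1 := by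
    refine card_le_of_connected (B := {e | e ∈ D.red ∧ ∀ w ∈ ends e, w ∈ RStar}) (r := r)
      (forest_anti D.forest (fun e he => he.1)) ?_
    intro v hv
    have hrv : Reach ends D.red r v := by rw [hReq] at hv; exact hv
    have hin := reach_in_comp (Relation.ReflTransGen.refl) hrv
    have h2 : Reach ends {e | e ∈ D.red ∧ ∀ w ∈ ends e, w ∈ RStar} r v := by
      rw [hReq]
      exact hin
    exact reach_symm h2
  -- partition of the components
  set Csml : Finset (Set V) := 𝒮.filter (fun S => IsSmall ends D.red S) with hCsmlDef
  set Kbig : Finset (Set V) := (𝒮.filter (fun S => ¬ IsSmall ends D.red S)).erase RStar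
    with hKbigDef
  have hRnotsmall : ¬ IsSmall ends D.red RStar := by
    intro h
    have h1 : eIn ends D.red RStar ≤ 1 := h
    omega
  have hRin : RStar ∈ 𝒮.filter (fun S => ¬ IsSmall ends D.red S) :=
    Finset.mem_filter.mpr ⟨hRmem, hRnotsmall⟩
  have hpart : ∀ g : Set V → ℚ, ∑ S ∈ 𝒮, g S
      = g RStar + (∑ C ∈ Csml, g C + ∑ K ∈ Kbig, g K) := by
    intro g
    rw [hCsmlDef, hKbigDef,
      ← Finset.sum_filter_add_sum_filter_not 𝒮 (fun S => IsSmall ends D.red S) g,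
      ← Finset.add_sum_erase _ g hRin]
    ring
  have hmemC : ∀ C : Set V, C ∈ Csml ↔ C ∈ SmallComps ends r D := by
    intro C
    rw [hCsmlDef, Finset.mem_filter]
    constructor
    · rintro ⟨h1, h2⟩
      exact ⟨(hmem𝒮 C).mp h1, h2⟩
    · rintro ⟨h1, h2⟩
      exact ⟨(hmem𝒮 C).mpr h1, h2⟩
  have hmemK : ∀ K : Set V, K ∈ Kbig ↔ K ∈ BigComps ends r RStar D := by
    intro K
    rw [hKbigDef, Finset.mem_erase, Finset.mem_filter]
    constructor
    · rintro ⟨h0, h1, h2⟩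
      exact ⟨(hmem𝒮 K).mp h1, h0, h2⟩
    · rintro ⟨h1, h0, h2⟩
      exact ⟨h0, (hmem𝒮 K).mpr h1, h2⟩
  set fibS : Set V → Finset (Set V) := fun K => Csml.filter (fun C => f C = K) with hfibSDef
  have hmaps : ∀ C ∈ Csml, f C ∈ Kbig := fun C hC =>
    (hmemK _).mpr (hf1 C ((hmemC C).mp hC))
  have hfiberEq : ∀ gg : Set V → ℚ, ∑ C ∈ Csml, gg C = ∑ K ∈ Kbig, ∑ C ∈ fibS K, gg C := by
    intro gg
    rw [hfibSDef]
    exact (Finset.sum_fiberwise_of_maps_to hmaps gg).symm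
  -- the density inequality per big component
  have hKineq : ∀ K ∈ Kbig,
      (d : ℚ) * ((K.ncard : ℚ) + ∑ C ∈ fibS K, (C.ncard : ℚ))
        ≤ ((k : ℚ) + (d : ℚ) + 1)
          * ((eIn ends D.red K : ℚ) + ∑ C ∈ fibS K, (eIn ends D.red C : ℚ)) := by
    intro K hK
    have hKb := hf2 K ((hmemK K).mp hK)
    have hsetEq : {C : Set V | C ∈ SmallComps ends r D ∧ f C = K} = ↑(fibS K) := by
      rw [hfibSDef]
      ext C
      simp only [Set.mem_setOf_eq, Finset.coe_filter, Finset.mem_filter]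
      constructor
      · rintro ⟨h1, h2⟩
        exact ⟨(hmemC C).mpr h1, h2⟩
      · rintro ⟨h1, h2⟩
        exact ⟨(hmemC C).mp h1, h2⟩
    rw [hsetEq, finsum_mem_coe_finset, finsum_mem_coe_finset] at hKb
    have hKne : K.Nonempty := by
      obtain ⟨⟨u, hu⟩, -⟩ := ((hmemK K).mp hK).1
      exact ⟨u, by rw [hu]; exact mem_compV_self u⟩
    have hK1 : (0 : ℚ) < (K.ncard : ℚ) := by
      have := (Set.ncard_pos (Set.toFinite K)).mpr hKne
      exact_mod_cast this
    have hsum0 : (0 : ℚ) ≤ ∑ C ∈ fibS K, (C.ncard : ℚ) :=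
      Finset.sum_nonneg fun C _ => by positivity
    have hden : (0 : ℚ) < (K.ncard : ℚ) + ∑ C ∈ fibS K, (C.ncard : ℚ) := by linarith
    have hdkp : (0 : ℚ) < (d : ℚ) + (k : ℚ) + 1 := by positivity
    have hmul := (div_le_div_iff₀ hdkp hden).mp hKb
    nlinarith [hmul]
  -- assemble the counts in ℚ
  have hnQ : (((ExplVerts ends r D).ncard : ℚ))
      = (RStar.ncard : ℚ) + ∑ K ∈ Kbig, ((K.ncard : ℚ) + ∑ C ∈ fibS K, (C.ncard : ℚ)) := by
    have h0 := hpart (fun S => (S.ncard : ℚ))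
    rw [hfiberEq (fun C => (C.ncard : ℚ))] at h0
    rw [Finset.sum_add_distrib, hHcard]
    push_cast
    linarith [h0]
  have hrhoQ : ((eIn ends D.red (ExplVerts ends r D) : ℚ))
      = (eIn ends D.red RStar : ℚ)
        + ∑ K ∈ Kbig, ((eIn ends D.red K : ℚ) + ∑ C ∈ fibS K, (eIn ends D.red C : ℚ)) := by
    have h0 := hpart (fun S => (eIn ends D.red S : ℚ))
    rw [hfiberEq (fun C => (eIn ends D.red C : ℚ))] at h0
    rw [Finset.sum_add_distrib, hRedCard]
    push_cast
    linarith [h0]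
  have hsumKE : (d : ℚ) * ∑ K ∈ Kbig, ((K.ncard : ℚ) + ∑ C ∈ fibS K, (C.ncard : ℚ))
      ≤ ((k : ℚ) + (d : ℚ) + 1)
        * ∑ K ∈ Kbig, ((eIn ends D.red K : ℚ) + ∑ C ∈ fibS K, (eIn ends D.red C : ℚ)) := by
    rw [Finset.mul_sum, Finset.mul_sum]
    exact Finset.sum_le_sum hKineq
  have hmQ : (({e : E | ∀ w ∈ ends e, w ∈ ExplVerts ends r D}).ncard : ℚ)
      = ((eIn ends D.red (ExplVerts ends r D) : ℚ))
        + ∑ b : Fin k,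
            (({e : E | D.col e = some b ∧ ∀ w ∈ ends e, w ∈ ExplVerts ends r D}).ncard : ℚ) := by
    rw [hmcard]
    push_cast
    ring
  have hblue : (k : ℚ) * (((ExplVerts ends r D).ncard : ℚ) - 1)
      ≤ ∑ b : Fin k,
          (({e : E | D.col e = some b ∧ ∀ w ∈ ends e, w ∈ ExplVerts ends r D}).ncard : ℚ) := by
    have h1 : ∀ b ∈ (Finset.univ : Finset (Fin k)),
        ((ExplVerts ends r D).ncard : ℚ) - 1
          ≤ (({e : E | D.col e = some b ∧ ∀ w ∈ ends e, w ∈ ExplVerts ends r D}).ncard : ℚ) := by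
      intro b _
      have h2 := hBble b
      have h3 : ((ExplVerts ends r D).ncard : ℚ)
          ≤ (({e : E | D.col e = some b ∧ ∀ w ∈ ends e, w ∈ ExplVerts ends r D}).ncard : ℚ)
            + 1 := by exact_mod_cast h2
      linarith
    calc (k : ℚ) * (((ExplVerts ends r D).ncard : ℚ) - 1)
        = ∑ _b ∈ (Finset.univ : Finset (Fin k)), (((ExplVerts ends r D).ncard : ℚ) - 1) := by
          rw [Finset.sum_const, Finset.card_univ, Fintype.card_fin, nsmul_eq_mul]
      _ ≤ _ := Finset.sum_le_sum h1
  have he1 : (d : ℚ) + 1 ≤ (eIn ends D.red RStar : ℚ) := by exact_mod_cast hRBig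
  have ha1 : (RStar.ncard : ℚ) ≤ (eIn ends D.red RStar : ℚ) + 1 := by exact_mod_cast hRcard
  have hfinal : ((k : ℚ) + 1) * ((k : ℚ) + (d : ℚ)) * (((ExplVerts ends r D).ncard : ℚ))
      - ((k : ℚ) + (d : ℚ) + 1)
        * (({e : E | ∀ w ∈ ends e, w ∈ ExplVerts ends r D}).ncard : ℚ)
      - (k : ℚ) ^ 2 < 0 := by
    have H1 : ((k : ℚ) + (d : ℚ) + 1)
        * ((k : ℚ) * (((ExplVerts ends r D).ncard : ℚ) - 1)
            + ((eIn ends D.red (ExplVerts ends r D) : ℚ)))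
        ≤ ((k : ℚ) + (d : ℚ) + 1)
          * (({e : E | ∀ w ∈ ends e, w ∈ ExplVerts ends r D}).ncard : ℚ) := by
      apply mul_le_mul_of_nonneg_left ?_ (by positivity)
      rw [hmQ]
      linarith [hblue]
    have H2 : (d : ℚ) * (RStar.ncard : ℚ) ≤ (d : ℚ) * ((eIn ends D.red RStar : ℚ) + 1) :=
      mul_le_mul_of_nonneg_left ha1 (by positivity)
    have H3 : ((k : ℚ) + 1) * ((d : ℚ) + 1) ≤ ((k : ℚ) + 1) * (eIn ends D.red RStar : ℚ) :=
      mul_le_mul_of_nonneg_left he1 (by positivity)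
    have H5 : (d : ℚ) * (((ExplVerts ends r D).ncard : ℚ))
        = (d : ℚ) * ((RStar.ncard : ℚ)
            + ∑ K ∈ Kbig, ((K.ncard : ℚ) + ∑ C ∈ fibS K, (C.ncard : ℚ))) := by
      rw [hnQ]
    have H6 : ((k : ℚ) + (d : ℚ) + 1) * ((eIn ends D.red (ExplVerts ends r D) : ℚ))
        = ((k : ℚ) + (d : ℚ) + 1) * ((eIn ends D.red RStar : ℚ)
            + ∑ K ∈ Kbig, ((eIn ends D.red K : ℚ)
                + ∑ C ∈ fibS K, (eIn ends D.red C : ℚ))) := by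
      rw [hrhoQ]
    nlinarith [H1, H2, H3, H5, H6, hsumKE]
  have hInt : ((k : ℤ) + 1) * ((k : ℤ) + (d : ℤ)) * ((ExplVerts ends r D).ncard : ℤ)
      - ((k : ℤ) + (d : ℤ) + 1) *
          (({e | ∀ w ∈ ends e, w ∈ ExplVerts ends r D} : Set E).ncard : ℤ)
      - (k : ℤ) ^ 2 < 0 := by exact_mod_cast hfinal
  refine ⟨hInt, fun hSp => ?_⟩
  have h0 := hSp (ExplVerts ends r D) {e : E | ∀ w ∈ ends e, w ∈ ExplVerts ends r D}
    (fun e he w hw => he w hw) ⟨r, hrH⟩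
  linarith [h0, hInt]
end

section
/- The red component R* has no relevant neighbours; that is, in H_{𝒯*} no red component is a small child of R* with respect to 𝒯* and σ*, and no red component is an interesting neighbour of R*. -/
/-!
Multigraphs are modelled by a finite vertex type `V`, a finite edge-index type `E`
and an incidence map `ends : E → Sym2 V` giving the two endpoints of each edge;
`Loopless` says no edge is a loop.  Parallel edges are allowed.
-/

open Classical

namespace NDT

variable {V E : Type}

lemma sym2_rep (z : Sym2 V) : ∃ a b, z = s(a, b) := by
  induction z using Sym2.ind with
  | _ a b => exact ⟨a, b, rfl⟩

lemma sym2_other {z : Sym2 V} {w : V} (h : w ∈ z) : ∃ c, z = s(w, c) := by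
  obtain ⟨a, b, rfl⟩ := sym2_rep z
  rcases Sym2.mem_iff.1 h with rfl | rfl
  · exact ⟨b, rfl⟩
  · exact ⟨a, Sym2.eq_swap⟩

variable {ends : E → Sym2 V} {A B : Set E} {a b c u v w x y z : V}

lemma reach_refl : Reach ends A a a := Relation.ReflTransGen.refl

lemma reach_symm (h : Reach ends A x y) : Reach ends A y x := by
  refine @Std.Symm.symm _ _ (@Relation.ReflTransGen.stdSymm _ (fun a b => ∃ e ∈ A, ends e = s(a, b)) ⟨?_⟩) _ _ h
  rintro a b ⟨e, he, hse⟩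
  exact ⟨e, he, by rw [hse, Sym2.eq_swap]⟩

lemma reach_trans (h : Reach ends A x y) (h' : Reach ends A y z) : Reach ends A x z :=
  h.trans h'

lemma reach_mono (hAB : A ⊆ B) (h : Reach ends A x y) : Reach ends B x y :=
  Relation.ReflTransGen.mono (fun a b ⟨e, he, hs⟩ => ⟨e, hAB he, hs⟩) _ _ h

lemma reach_step (he : e ∈ A) (hs : ends e = s(a, b)) : Reach ends A a b :=
  Relation.ReflTransGen.single ⟨e, he, hs⟩

lemma mem_compV : w ∈ compV ends A v ↔ Reach ends A v w := Iff.rfl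

lemma self_mem_compV : v ∈ compV ends A v := reach_refl

lemma compV_eq_of_reach (h : Reach ends A v w) : compV ends A v = compV ends A w := by
  ext z
  exact ⟨fun hz => reach_trans (reach_symm h) hz, fun hz => reach_trans h hz⟩

lemma comps_eq_of_mem {S : Set V} (hS : S ∈ comps ends A) (hw : w ∈ S) :
    S = compV ends A w := by
  obtain ⟨v, rfl⟩ := hS
  exact compV_eq_of_reach hw

lemma compV_mem_comps : compV ends A v ∈ comps ends A := ⟨v, rfl⟩

lemma comps_finite [Finite V] : (comps ends A).Finite := by
  have : comps ends A ⊆ Set.range (compV ends A) := by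
    rintro S ⟨v, rfl⟩; exact ⟨v, rfl⟩
  exact (Set.finite_range _).subset this

/-- closure lemma -/
lemma compV_subset_of_closed {S : Set V} (hr : v ∈ S)
    (hcl : ∀ g ∈ A, ∀ w ∈ ends g, w ∈ S → ∀ w' ∈ ends g, w' ∈ S) :
    compV ends A v ⊆ S := by
  intro w hw
  induction hw with
  | refl => exact hr
  | tail _ step ih =>
    obtain ⟨g, hg, hs⟩ := step
    exact hcl g hg _ (by rw [hs]; exact Sym2.mem_mk_left _ _) ih _
      (by rw [hs]; exact Sym2.mem_mk_right _ _)

/-- avoid an edge whose endpoints are out of reach -/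
lemma reach_avoid {e : E} (h : Reach ends A a b)
    (he : ∀ w ∈ ends e, ¬ Reach ends A a w) : Reach ends (A \ {e}) a b := by
  induction h with
  | refl => exact reach_refl
  | tail hac step ih =>
    obtain ⟨g, hg, hs⟩ := step
    rcases eq_or_ne g e with rfl | hne
    · exact absurd hac (he _ (by rw [hs]; exact Sym2.mem_mk_left _ _))
    · exact ih.tail ⟨g, ⟨hg, hne⟩, hs⟩

/-- decomposition of a walk at an extra edge -/
lemma reach_insert_elim {g : E} {S : Set E} (h : Reach ends (insert g S) a b)
    (hg : ends g = s(u, v)) :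
    Reach ends S a b ∨ (Reach ends S a u ∧ Reach ends S v b) ∨
      (Reach ends S a v ∧ Reach ends S u b) := by
  induction h with
  | refl => exact Or.inl reach_refl
  | @tail c d hac step ih =>
    obtain ⟨g', hg', hs⟩ := step
    rcases hg' with rfl | hg'S
    · have : (c = u ∧ d = v) ∨ (c = v ∧ d = u) := Sym2.eq_iff.1 (hs ▸ hg)
      rcases this with ⟨rfl, rfl⟩ | ⟨rfl, rfl⟩
      · rcases ih with h1 | ⟨h1, h2⟩ | ⟨h1, h2⟩
        · exact Or.inr (Or.inl ⟨h1, reach_refl⟩)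
        · exact Or.inr (Or.inl ⟨h1, reach_refl⟩)
        · exact Or.inl h1
      · rcases ih with h1 | ⟨h1, h2⟩ | ⟨h1, h2⟩
        · exact Or.inr (Or.inr ⟨h1, reach_refl⟩)
        · exact Or.inl h1
        · exact Or.inr (Or.inr ⟨h1, reach_refl⟩)
    · have step' : Reach ends S c d := reach_step hg'S hs
      rcases ih with h1 | ⟨h1, h2⟩ | ⟨h1, h2⟩
      · exact Or.inl (h1.trans step')
      · exact Or.inr (Or.inl ⟨h1, h2.trans step'⟩)
      · exact Or.inr (Or.inr ⟨h1, h2.trans step'⟩)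

lemma insert_diff_self_of_mem {e : E} (he : e ∈ A) : insert e (A \ {e}) = A := by
  rw [Set.insert_diff_singleton, Set.insert_eq_self.2 he]

/-- decompose a walk at an edge of the set -/
lemma reach_elim_at {e : E} (he : e ∈ A) (h : Reach ends A a b) (hg : ends e = s(u, v)) :
    Reach ends (A \ {e}) a b ∨ (Reach ends (A \ {e}) a u ∧ Reach ends (A \ {e}) v b) ∨
      (Reach ends (A \ {e}) a v ∧ Reach ends (A \ {e}) u b) :=
  reach_insert_elim (by rwa [insert_diff_self_of_mem he]) hg

end NDT
namespace NDT

variable {V E : Type} {ends : E → Sym2 V} {A B T F : Set E} {r a b c u v w x y z : V}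

lemma forest_mono (hF : IsForest ends A) (hBA : B ⊆ A) : IsForest ends B := by
  intro e he x y hxy hr
  exact hF e (hBA he) x y hxy (reach_mono (Set.diff_subset_diff_left hBA) hr)

/-- first exit of a walk out of a vertex set X -/
lemma first_exit {X : Set V} (h : Reach ends A a b) (hb : b ∉ X) (ha : a ∈ X) :
    ∃ e u v, e ∈ A ∧ ends e = s(u, v) ∧ u ∈ X ∧ v ∉ X ∧ Reach ends (A \ {e}) a u := by
  revert ha
  induction h using Relation.ReflTransGen.head_induction_on with
  | refl => exact fun ha => absurd ha hb
  | @head a' c step h' ih =>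
    intro ha
    obtain ⟨g, hgA, hs⟩ := step
    by_cases hc : c ∈ X
    · obtain ⟨e, u, v, heA, hse, hu, hv, hreach⟩ := ih hc
      have hne : g ≠ e := by
        rintro rfl
        rcases Sym2.eq_iff.1 (hs ▸ hse : s(a', c) = s(u, v)) with ⟨rfl, rfl⟩ | ⟨rfl, rfl⟩
        · exact hv hc
        · exact hv ha
      exact ⟨e, u, v, heA, hse, hu, hv,
        Relation.ReflTransGen.head ⟨g, ⟨hgA, hne⟩, hs⟩ hreach⟩
    · exact ⟨g, a', c, hgA, hs, ha, hc, reach_refl⟩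

/-- a minimal connecting subset -/
lemma exists_min_connect [Finite E] (h : Reach ends A a b) :
    ∃ P, P ⊆ A ∧ Reach ends P a b ∧ ∀ e ∈ P, ¬ Reach ends (P \ {e}) a b := by
  obtain ⟨n, hn⟩ : ∃ n, A.ncard = n := ⟨_, rfl⟩
  induction n using Nat.strong_induction_on generalizing A with
  | _ n ih =>
    by_cases hall : ∀ e ∈ A, ¬ Reach ends (A \ {e}) a b
    · exact ⟨A, subset_rfl, h, hall⟩
    · push_neg at hall
      obtain ⟨e, he, hre⟩ := hall
      obtain ⟨P, hPs, hPr, hPm⟩ := ih ((A \ {e}).ncard)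
        (hn ▸ Set.ncard_diff_singleton_lt_of_mem he A.toFinite) hre rfl
      exact ⟨P, hPs.trans Set.diff_subset, hPr, hPm⟩

/-- crossing essential edge in a forest -/
lemma exists_cross [Finite E] {X : Set V} (hF : IsForest ends A) (h : Reach ends A a b)
    (ha : a ∈ X) (hb : b ∉ X) :
    ∃ e u v, e ∈ A ∧ ends e = s(u, v) ∧ u ∈ X ∧ v ∉ X ∧
      Reach ends (A \ {e}) a u ∧ Reach ends (A \ {e}) v b ∧ ¬ Reach ends (A \ {e}) a b := by
  obtain ⟨P, hPA, hPr, hPm⟩ := exists_min_connect h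
  obtain ⟨e, u, v, heP, hse, hu, hv, hau⟩ := first_exit hPr hb ha
  have hPf : IsForest ends P := forest_mono hF hPA
  have hvb : Reach ends (P \ {e}) v b := by
    rcases reach_elim_at heP hPr hse with h1 | ⟨h1, h2⟩ | ⟨h1, h2⟩
    · exact absurd h1 (hPm e heP)
    · exact h2
    · exact absurd ((reach_symm hau).trans h1) (hPf e heP u v hse)
  have hsub : P \ {e} ⊆ A \ {e} := Set.diff_subset_diff_left hPA
  refine ⟨e, u, v, hPA heP, hse, hu, hv, reach_mono hsub hau, reach_mono hsub hvb, ?_⟩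
  intro hab
  exact hF e (hPA heP) u v hse
    (((reach_symm (reach_mono hsub hau)).trans hab).trans (reach_symm (reach_mono hsub hvb)))

/-- one endpoint of a tree edge still reaches r after its removal -/
lemma tree_other_side {t : E} (hT : IsSpanningTree ends T) (ht : t ∈ T)
    (hs : ends t = s(u, v)) : Reach ends (T \ {t}) u r ∨ Reach ends (T \ {t}) v r := by
  rcases reach_elim_at ht (hT.2 u r) hs with h1 | ⟨h1, h2⟩ | ⟨h1, h2⟩
  · exact Or.inl h1
  · exact Or.inr h2
  · exact Or.inl h2

/-- the cut side of a tree edge is connected -/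
lemma tree_cut_connected {t : E} (hT : IsSpanningTree ends T) (ht : t ∈ T)
    (hz : ¬ Reach ends (T \ {t}) z r) (hw : ¬ Reach ends (T \ {t}) w r) :
    Reach ends (T \ {t}) z w := by
  obtain ⟨p, q, hs⟩ := sym2_rep (ends t)
  rcases reach_elim_at ht (hT.2 z w) hs with h1 | ⟨h1, h2⟩ | ⟨h1, h2⟩
  · exact h1
  · rcases tree_other_side hT ht hs (r := r) with hp | hq
    · exact absurd (h1.trans hp) hz
    · exact absurd ((reach_symm h2).trans hq) hw
  · rcases tree_other_side hT ht hs (r := r) with hp | hq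
    · exact absurd ((reach_symm h2).trans hp) hw
    · exact absurd (h1.trans hq) hz

/-- exchanging an edge keeps being a forest -/
lemma forest_exchange {f g : E} (hF : IsForest ends A) (hf : f ∈ A) (hg : g ∉ A)
    (hends : ends g = s(u, v)) (huv : ¬ Reach ends (A \ {f}) u v) :
    IsForest ends ((A \ {f}) ∪ {g}) := by
  intro h hh x y hxy hr
  rcases hh with hh | hh
  · -- h an old edge
    have hgh : g ≠ h := fun hE => hg (hE ▸ hh.1)
    have hset : ((A \ {f}) ∪ {g}) \ {h} = insert g ((A \ {f}) \ {h}) := by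
      ext z
      simp only [Set.mem_diff, Set.mem_union, Set.mem_insert_iff, Set.mem_singleton_iff]
      constructor
      · rintro ⟨hz | rfl, hzh⟩
        · exact Or.inr ⟨hz, hzh⟩
        · exact Or.inl rfl
      · rintro (rfl | ⟨hz, hzh⟩)
        · exact ⟨Or.inr rfl, fun hE => hgh hE⟩
        · exact ⟨Or.inl hz, hzh⟩
    rw [hset] at hr
    rcases reach_insert_elim hr hends with h1 | ⟨h1, h2⟩ | ⟨h1, h2⟩
    · exact hF h hh.1 x y hxy
        (reach_mono (fun z hz => ⟨hz.1.1, hz.2⟩) h1)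
    · -- x..u, v..y  : then u..x -h- y..v  within A\{f}
      have hsub : (A \ {f}) \ {h} ⊆ A \ {f} := Set.diff_subset
      have : Reach ends (A \ {f}) u v :=
        ((reach_symm (reach_mono hsub h1)).trans
          (reach_step hh hxy)).trans (reach_symm (reach_mono hsub h2))
      exact huv this
    · have hsub : (A \ {f}) \ {h} ⊆ A \ {f} := Set.diff_subset
      have : Reach ends (A \ {f}) u v :=
        ((reach_mono hsub h2).trans
          (reach_symm (reach_step hh hxy))).trans (reach_mono hsub h1)
      exact huv this
  · -- h = g
    rcases hh with rfl
    have hset : ((A \ {f}) ∪ {h}) \ {h} = A \ {f} := by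
      ext z
      simp only [Set.mem_diff, Set.mem_union, Set.mem_singleton_iff]
      constructor
      · rintro ⟨hz | rfl, hzh⟩
        · exact hz
        · exact absurd rfl hzh
      · rintro ⟨hz, hzf⟩
        exact ⟨Or.inl ⟨hz, hzf⟩, fun hE => hg (hE ▸ hz)⟩
    rw [hset] at hr
    rcases Sym2.eq_iff.1 (hends.symm.trans hxy) with ⟨rfl, rfl⟩ | ⟨rfl, rfl⟩
    · exact huv hr
    · exact huv (reach_symm hr)

end NDT
namespace NDT

variable {V E : Type} {ends : E → Sym2 V} {A B T F : Set E} {r a b c u v w x y z : V}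

/-- exchanging an edge across the cut keeps a spanning tree -/
lemma st_exchange {t e : E} (hT : IsSpanningTree ends T) (ht : t ∈ T) (he : e ∉ T)
    (hends : ends e = s(u, v)) (hu : ¬ Reach ends (T \ {t}) u r)
    (hv : Reach ends (T \ {t}) v r) :
    IsSpanningTree ends ((T \ {t}) ∪ {e}) := by
  constructor
  · exact forest_exchange hT.1 ht he hends (fun hr' => hu (hr'.trans hv))
  · have key : ∀ z, Reach ends ((T \ {t}) ∪ {e}) z r := by
      intro z
      by_cases hz : Reach ends (T \ {t}) z r
      · exact reach_mono Set.subset_union_left hz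
      · have h1 : Reach ends (T \ {t}) z u := tree_cut_connected hT ht hz hu
        have h2 : Reach ends ((T \ {t}) ∪ {e}) u v :=
          reach_step (Or.inr rfl) hends
        exact ((reach_mono Set.subset_union_left h1).trans h2).trans
          (reach_mono Set.subset_union_left hv)
    exact fun p q => (key p).trans (reach_symm (key q))

/-- the tail of a blue path lies below its head in the tree:
if the head cannot reach `r` after deleting `t`, neither can the tail. -/
lemma bluereach_in_cut {t : E} (ht : t ∈ T)
    (h : BlueReach ends r T z w) (hw : ¬ Reach ends (T \ {t}) w r) :
    ¬ Reach ends (T \ {t}) z r := by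
  induction h using Relation.ReflTransGen.head_induction_on with
  | refl => exact hw
  | @head a' c step h' ih =>
    obtain ⟨g, hgT, hs, hga⟩ := step
    intro hzr
    rcases eq_or_ne g t with rfl | hne
    · exact hga (reach_mono (fun q hq => hq) hzr)
    · have hgm : g ∈ T \ {t} := ⟨hgT, hne⟩
      rcases reach_elim_at hgm hzr hs with h1 | ⟨h1, h2⟩ | ⟨h1, h2⟩
      · exact hga (reach_mono (fun q hq => ⟨hq.1.1, hq.2⟩) h1)
      · exact ih (reach_mono Set.diff_subset h2)
      · exact hga (reach_mono (fun q hq => ⟨hq.1.1, hq.2⟩) h2)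

/-- transfer of components between two edge sets that differ only inside D0 -/
lemma comp_transfer {D0 : Set V}
    (hchg : ∀ g, ¬ (g ∈ A ↔ g ∈ B) → ∀ w ∈ ends g, w ∈ D0)
    (hdisj : ∀ w ∈ compV ends A v, w ∉ D0) :
    compV ends B v = compV ends A v := by
  have h1 : ∀ w, Reach ends A v w → Reach ends B v w := by
    intro w hw
    induction hw with
    | refl => exact reach_refl
    | @tail p q hvp step ih =>
      obtain ⟨g, hg, hs⟩ := step
      have hgB : g ∈ B := by
        by_contra hgB
        exact hdisj p hvp (hchg g (fun hiff => hgB (hiff.1 hg)) p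
          (by rw [hs]; exact Sym2.mem_mk_left _ _))
      exact ih.tail ⟨g, hgB, hs⟩
  have h2 : ∀ w, Reach ends B v w → Reach ends A v w := by
    intro w hw
    induction hw with
    | refl => exact reach_refl
    | @tail p q hvp step ih =>
      obtain ⟨g, hg, hs⟩ := step
      have hgA : g ∈ A := by
        by_contra hgA
        exact hdisj p ih (hchg g (fun hiff => hgA (hiff.2 hg)) p
          (by rw [hs]; exact Sym2.mem_mk_left _ _))
      exact ih.tail ⟨g, hgA, hs⟩
  ext w
  exact ⟨h2 w, h1 w⟩

/-- transfer of inner edge counts -/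
lemma eIn_transfer {D0 : Set V} {S : Set V}
    (hchg : ∀ g, ¬ (g ∈ A ↔ g ∈ B) → ∀ w ∈ ends g, w ∈ D0)
    (hS : ∀ w ∈ S, w ∉ D0) :
    eIn ends B S = eIn ends A S := by
  unfold eIn
  congr 1
  ext g
  simp only [Set.mem_setOf_eq]
  constructor
  · rintro ⟨hgB, hins⟩
    refine ⟨?_, hins⟩
    by_contra hgA
    obtain ⟨p, q, hs⟩ := sym2_rep (ends g)
    have hp : p ∈ ends g := by rw [hs]; exact Sym2.mem_mk_left _ _
    exact hS p (hins p hp) (hchg g (fun hiff => hgA (hiff.2 hgB)) p hp)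
  · rintro ⟨hgA, hins⟩
    refine ⟨?_, hins⟩
    by_contra hgB
    obtain ⟨p, q, hs⟩ := sym2_rep (ends g)
    have hp : p ∈ ends g := by rw [hs]; exact Sym2.mem_mk_left _ _
    exact hS p (hins p hp) (hchg g (fun hiff => hgB (hiff.1 hgA)) p hp)

/-- identify a component -/
lemma compV_eq_of {S : Set V} (hmem : v ∈ S) (hreach : ∀ w ∈ S, Reach ends A v w)
    (hclosed : ∀ g ∈ A, ∀ w ∈ ends g, w ∈ S → ∀ w' ∈ ends g, w' ∈ S) :
    compV ends A v = S :=
  Set.Subset.antisymm (compV_subset_of_closed hmem hclosed) (fun w hw => hreach w hw)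

/-- a component with no inner edges is a singleton (loopless graph) -/
lemma compV_singleton [Finite E] (hL : Loopless ends) (h0 : eIn ends A (compV ends A v) = 0) :
    compV ends A v = {v} := by
  have hno : ∀ g ∈ A, v ∉ ends g := by
    intro g hg hvg
    obtain ⟨cc, hs⟩ := sym2_other hvg
    have hcc : cc ∈ compV ends A v := reach_step hg hs
    have : g ∈ {e | e ∈ A ∧ ∀ w ∈ ends e, w ∈ compV ends A v} := by
      refine ⟨hg, ?_⟩
      intro w hw
      rw [hs] at hw
      rcases Sym2.mem_iff.1 hw with rfl | rfl
      · exact self_mem_compV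
      · exact hcc
    have hne : {e | e ∈ A ∧ ∀ w ∈ ends e, w ∈ compV ends A v}.Nonempty := ⟨g, this⟩
    rw [eIn, Set.ncard_eq_zero (Set.toFinite _)] at h0
    · exact absurd h0 (Set.nonempty_iff_ne_empty.1 hne)
  ext w
  simp only [Set.mem_singleton_iff]
  constructor
  · intro hw
    rcases (Relation.ReflTransGen.cases_head hw) with rfl | ⟨c, ⟨g, hg, hs⟩, _⟩
    · rfl
    · exact absurd (by rw [hs]; exact Sym2.mem_mk_left _ _) (hno g hg)
  · rintro rfl; exact self_mem_compV

/-- no edge of `A` is incident to `v` when its component is edgeless -/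
lemma no_edge_at [Finite E] (hL : Loopless ends) (h0 : eIn ends A (compV ends A v) = 0)
    {g : E} (hg : g ∈ A) (hvg : v ∈ ends g) : False := by
  obtain ⟨cc, hs⟩ := sym2_other hvg
  have hcc : cc ∈ compV ends A v := reach_step hg hs
  rw [compV_singleton hL h0] at hcc
  rcases hcc with rfl
  exact hL g (by rw [hs]; exact Sym2.mk_isDiag_iff.2 rfl)

end NDT
namespace NDT

variable {V E : Type} {k : ℕ} {ends : E → Sym2 V} {r a b u v w x y : V}

lemma red_blue_disjoint (D : STDecomp k ends) {g : E} {i : Fin k}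
    (hr : g ∈ D.red) (hb : g ∈ D.blue i) : False := by
  have := hr.symm.trans hb
  simp at this

/-- swapping a blue tree edge with a red edge across the cut -/
lemma swap_decomp (D : STDecomp k ends) (i : Fin k) (t e : E)
    (ht : t ∈ D.blue i) (he : e ∈ D.red)
    (hends : ends e = s(u, v)) (hu : ¬ Reach ends (D.blue i \ {t}) u r)
    (hv : Reach ends (D.blue i \ {t}) v r)
    (hp : ends t = s(x, y)) (hxy : ¬ Reach ends (D.red \ {e}) x y) :
    ∃ D' : STDecomp k ends, D'.red = (D.red \ {e}) ∪ {t} ∧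
      D'.blue i = (D.blue i \ {t}) ∪ {e} ∧ ∀ i' , i' ≠ i → D'.blue i' = D.blue i' := by
  classical
  have hte : t ≠ e := fun hE => red_blue_disjoint D he (hE ▸ ht)
  set col' : E → Option (Fin k) := fun g => if g = t then none else if g = e then some i else D.col g
    with hcol'
  have hte' : e ≠ t := Ne.symm hte
  have hredset : {g | col' g = none} = (D.red \ {e}) ∪ {t} := by
    ext g
    by_cases hgt : g = t
    · subst hgt; simp [hcol', STDecomp.red, hte]
    · by_cases hge : g = e
      · subst hge; simp [hcol', STDecomp.red, hte', hgt]
      · simp [hcol', STDecomp.red, hgt, hge]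
  have hblueset : {g | col' g = some i} = (D.blue i \ {t}) ∪ {e} := by
    ext g
    by_cases hgt : g = t
    · subst hgt; simp [hcol', STDecomp.blue, hte', hte]
    · by_cases hge : g = e
      · subst hge; simp [hcol', STDecomp.blue, hgt]
      · simp [hcol', STDecomp.blue, hgt, hge]
  have hotherset : ∀ i' : Fin k, i' ≠ i → {g | col' g = some i'} = D.blue i' := by
    intro i' hi'
    have hti' : D.col t ≠ some i' := by
      rw [show D.col t = some i from ht]
      simp [Ne.symm hi']
    have hei' : D.col e ≠ some i' := by
      rw [show D.col e = none from he]
      simp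
    ext g
    by_cases hgt : g = t
    · subst hgt; simp [hcol', STDecomp.blue, hti']
    · by_cases hge : g = e
      · subst hge; simp [hcol', STDecomp.blue, hgt, hei', Ne.symm hi']
      · simp [hcol', STDecomp.blue, hgt, hge]
  refine ⟨⟨col', ?_, ?_⟩, hredset, hblueset, hotherset⟩
  · intro i'
    rcases eq_or_ne i' i with rfl | hi'
    · rw [show {e_1 | col' e_1 = some i'} = (D.blue i' \ {t}) ∪ {e} from hblueset]
      exact st_exchange (D.tree i') ht (fun hE => red_blue_disjoint D he hE) hends hu hv
    · rw [show {e_1 | col' e_1 = some i'} = D.blue i' from hotherset i' hi']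
      exact D.tree i'
  · rw [show {e_1 | col' e_1 = none} = (D.red \ {e}) ∪ {t} from hredset]
    exact forest_exchange D.forest he (fun hE => red_blue_disjoint D hE ht) hp hxy

end NDT
namespace NDT

variable {V E : Type} [Finite V] [Finite E] {ends : E → Sym2 V} {F F2 A A' : Set E}
  {r : V} {RStar : Set V}

/-- at least two red edges at the root's component survive -/
lemma two_in_root_comp {e : E} (hrc : RStar = compV ends F r)
    (hdeg : 3 ≤ degIn ends F r ∨ TwoPaths ends F r)
    (hsub : ∀ g ∈ F, (∀ w ∈ ends g, w ∈ RStar) → g ≠ e → g ∈ F2) :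
    2 ≤ eIn ends F2 (compV ends F2 r) := by
  set Tgt : Set E := {g | g ∈ F2 ∧ ∀ w ∈ ends g, w ∈ compV ends F2 r} with hTgt
  have key : ∀ g ∈ F, r ∈ ends g → g ≠ e → g ∈ Tgt := by
    intro g hg hrg hge
    obtain ⟨cc, hs⟩ := sym2_other hrg
    have hin : ∀ w ∈ ends g, w ∈ RStar := by
      intro w hw
      rw [hs, Sym2.mem_iff] at hw
      rcases hw with rfl | rfl
      · rw [hrc]; exact self_mem_compV
      · rw [hrc]; exact reach_step hg hs
    have hg2 : g ∈ F2 := hsub g hg hin hge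
    refine ⟨hg2, ?_⟩
    intro w hw
    rw [hs, Sym2.mem_iff] at hw
    rcases hw with rfl | rfl
    · exact self_mem_compV
    · exact reach_step hg2 hs
  rcases hdeg with hdeg | ⟨e1, f1, e2, f2, he1, hf1, he2, hf2, h12, h12', h12'', h12''',
      ⟨p, q, hep, hfp, hef1⟩, ⟨p2, q2, hep2, hfp2, hef2⟩⟩
  · -- degree case
    have hsub2 : {g | g ∈ F ∧ r ∈ ends g} \ {e} ⊆ Tgt := by
      rintro g ⟨⟨hg, hrg⟩, hge⟩
      exact key g hg hrg hge
    have h3 : degIn ends F r ≤ ({g | g ∈ F ∧ r ∈ ends g} \ {e}).ncard + 1 := by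
      calc degIn ends F r ≤ ({g | g ∈ F ∧ r ∈ ends g} \ {e}).ncard + ({e} : Set E).ncard :=
            Set.ncard_le_ncard_diff_add_ncard _ _ (Set.toFinite _)
        _ = ({g | g ∈ F ∧ r ∈ ends g} \ {e}).ncard + 1 := by rw [Set.ncard_singleton]
    have := Set.ncard_le_ncard hsub2 (Set.toFinite _)
    have hTE : eIn ends F2 (compV ends F2 r) = Tgt.ncard := rfl
    rw [hTE]
    omega
  · -- two paths case
    -- choose a pair avoiding e
    obtain ⟨E1, F1, P, Q, hE1, hF1, hEp, hFp, hEe, hFe, hEF⟩ :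
        ∃ E1 F1 P Q, E1 ∈ F ∧ F1 ∈ F ∧ ends E1 = s(r, P) ∧ ends F1 = s(P, Q) ∧
          E1 ≠ e ∧ F1 ≠ e ∧ E1 ≠ F1 := by
      by_cases he : e = e1 ∨ e = f1
      · refine ⟨e2, f2, p2, q2, he2, hf2, hep2, hfp2, ?_, ?_, hef2⟩
        · rintro rfl; rcases he with rfl | rfl
          · exact h12 rfl
          · exact h12'' rfl
        · rintro rfl; rcases he with rfl | rfl
          · exact h12' rfl
          · exact h12''' rfl
      · push_neg at he
        exact ⟨e1, f1, p, q, he1, hf1, hep, hfp, Ne.symm he.1, Ne.symm he.2, hef1⟩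
    have hPR : P ∈ RStar := by rw [hrc]; exact reach_step hE1 hEp
    have hQR : Q ∈ RStar := by
      rw [hrc]; exact (reach_step hE1 hEp).trans (reach_step hF1 hFp)
    have hE1t : E1 ∈ Tgt := key E1 hE1 (by rw [hEp]; exact Sym2.mem_mk_left _ _) hEe
    have hF1t : F1 ∈ Tgt := by
      have hF12 : F1 ∈ F2 := hsub F1 hF1 (by
        intro w hw
        rw [hFp, Sym2.mem_iff] at hw
        rcases hw with rfl | rfl
        · exact hPR
        · exact hQR) hFe
      refine ⟨hF12, ?_⟩
      have hrP : Reach ends F2 r P := reach_step hE1t.1 hEp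
      intro w hw
      rw [hFp, Sym2.mem_iff] at hw
      rcases hw with rfl | rfl
      · exact hrP
      · exact hrP.trans (reach_step hF12 hFp)
    have hsub2 : {E1, F1} ⊆ Tgt := by
      rintro g (rfl | rfl)
      · exact hE1t
      · exact hF1t
    have h2 : ({E1, F1} : Set E).ncard = 2 := Set.ncard_pair hEF
    have := Set.ncard_le_ncard hsub2 (Set.toFinite _)
    have hTE : eIn ends F2 (compV ends F2 r) = Tgt.ncard := rfl
    rw [hTE]
    omega

/-- abstract ρ–decrease lemma -/
lemma rho_decrease {d : ℕ} {OldAff NewAff : Set (Set V)} {j : ℕ} {W : Set V}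
    (hj : d + 1 ≤ j)
    (hOld : ∀ S ∈ comps ends A, S ∉ OldAff →
      S ∈ comps ends A' ∧ eIn ends A' S = eIn ends A S)
    (hNew : ∀ S ∈ comps ends A', S ∉ NewAff →
      S ∈ comps ends A ∧ eIn ends A' S = eIn ends A S)
    (hNewSmall : ∀ S ∈ comps ends A', S ∈ NewAff → eIn ends A' S < j)
    (hOldSmall : ∀ S ∈ comps ends A, S ∈ OldAff → eIn ends A S ≤ j)
    (hWc : W ∈ comps ends A) (hWe : eIn ends A W = j) (hWn : W ∉ comps ends A') :
    RhoLt d ends A' A := by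
  refine ⟨j, hj, ?_, ?_⟩
  · -- strict decrease at j
    have hsub : {S | S ∈ comps ends A' ∧ eIn ends A' S = j} ⊆
        {S | S ∈ comps ends A ∧ eIn ends A S = j} \ {W} := by
      rintro S ⟨hSc, hSe⟩
      have hSa : S ∉ NewAff := fun hin => absurd hSe (Nat.ne_of_lt (hNewSmall S hSc hin))
      obtain ⟨hSo, hEq⟩ := hNew S hSc hSa
      refine ⟨⟨hSo, hEq ▸ hSe⟩, ?_⟩
      rintro rfl
      exact hWn hSc
    have hWin : W ∈ {S | S ∈ comps ends A ∧ eIn ends A S = j} := ⟨hWc, hWe⟩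
    have hfin : {S | S ∈ comps ends A ∧ eIn ends A S = j}.Finite :=
      comps_finite.subset (fun S hS => hS.1)
    have hfin' : ({S | S ∈ comps ends A ∧ eIn ends A S = j} \ {W}).Finite :=
      hfin.subset Set.diff_subset
    calc rhoCnt ends A' j ≤ ({S | S ∈ comps ends A ∧ eIn ends A S = j} \ {W}).ncard :=
          Set.ncard_le_ncard hsub hfin'
      _ < rhoCnt ends A j := by
          unfold rhoCnt
          exact Set.ncard_lt_ncard (Set.sdiff_singleton_ssubset.2 hWin) hfin
  · -- equality above j
    intro i hi
    unfold rhoCnt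
    congr 1
    ext S
    simp only [Set.mem_setOf_eq]
    constructor
    · rintro ⟨hSc, hSe⟩
      have hSa : S ∉ NewAff := fun hin => absurd hSe
        (Nat.ne_of_lt (lt_trans (hNewSmall S hSc hin) hi))
      obtain ⟨hSo, hEq⟩ := hNew S hSc hSa
      exact ⟨hSo, hEq ▸ hSe⟩
    · rintro ⟨hSc, hSe⟩
      have hSa : S ∉ OldAff := fun hin =>
        absurd hSe (Nat.ne_of_lt (lt_of_le_of_lt (hOldSmall S hSc hin) hi))
      obtain ⟨hSo, hEq⟩ := hOld S hSc hSa
      exact ⟨hSo, hEq.trans hSe⟩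

end NDT
namespace NDT

variable {V E : Type} {ends : E → Sym2 V} {A : Set E} {v w w' : V} {g : E}

lemma reach_of_mem_mem (hg : g ∈ A) (hw : w ∈ ends g) (hw' : w' ∈ ends g) :
    Reach ends A w w' := by
  obtain ⟨a, b, hs⟩ := sym2_rep (ends g)
  rw [hs, Sym2.mem_iff] at hw hw'
  rcases hw with rfl | rfl <;> rcases hw' with rfl | rfl
  · exact reach_refl
  · exact reach_step hg hs
  · exact reach_symm (reach_step hg hs)
  · exact reach_refl

lemma compV_mono {B : Set E} (hAB : A ⊆ B) : compV ends A v ⊆ compV ends B v :=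
  fun _ hw => reach_mono hAB hw

lemma comps_unique {S S' : Set V} (hS : S ∈ comps ends A) (hS' : S' ∈ comps ends A)
    (hw : w ∈ S) (hw' : w ∈ S') : S = S' :=
  (comps_eq_of_mem hS hw).trans (comps_eq_of_mem hS' hw').symm

end NDT
namespace NDT

variable {V E : Type} [Finite V] [Finite E] {k d : ℕ} {ends : E → Sym2 V}

/-- Part 1: a small red component joined to `R*` by a blue arc yields a
ρ-decreasing exchange. -/
lemma small_child_swap (D : STDecomp k ends) {RStar C : Set V} {r x y : V} {b : Fin k}
    (hRC : RStar ∈ comps ends D.red) (hrR : r ∈ RStar)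
    (hRBig : d + 1 ≤ eIn ends D.red RStar)
    (hdeg : 3 ≤ degIn ends D.red r ∨ TwoPaths ends D.red r)
    (hCc : C ∈ comps ends D.red) (hCR : C ≠ RStar)
    (hxR : x ∈ RStar) (hyC : y ∈ C)
    (harc : BlueArc ends r (D.blue b) x y)
    (hsmall : eIn ends D.red C ≤ 1) :
    ∃ D' : STDecomp k ends, RhoLt d ends D'.red D.red := by
  classical
  set F := D.red with hF
  set T := D.blue b with hT
  obtain ⟨t, htT, hts, htcut⟩ := harc
  have hRr : RStar = compV ends F r := comps_eq_of_mem hRC hrR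
  have hRx : RStar = compV ends F x := comps_eq_of_mem hRC hxR
  have hCy : C = compV ends F y := comps_eq_of_mem hCc hyC
  set s := eIn ends F RStar with hs
  set eC := eIn ends F C with heC
  have hdisjRC : ∀ w, w ∈ RStar → w ∈ C → False := fun w h1 h2 =>
    hCR (comps_unique hCc hRC h2 h1)
  have hFforest : IsForest ends F := D.forest
  have hxr' : x ∈ compV ends F r := hRr ▸ hxR
  have hxr : Reach ends F x r := reach_symm hxr'
  -- find the crossing red edge e
  obtain ⟨e, u, v, heF, hes, huX, hvX, hxu, hvr, hxrn⟩ :=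
    exists_cross (X := {z | ¬ Reach ends (T \ {t}) z r}) hFforest hxr htcut
      (fun hnr => hnr reach_refl)
  have hvXr : Reach ends (T \ {t}) v r := not_not.1 hvX
  have htF : t ∉ F := fun hE => red_blue_disjoint D hE htT
  have huR : u ∈ RStar := hRx ▸ reach_mono Set.diff_subset hxu
  have hvR : v ∈ RStar := hRr ▸ reach_mono Set.diff_subset (reach_symm hvr)
  have hesR : ∀ w ∈ ends e, w ∈ RStar := by
    intro w hw
    rw [hes, Sym2.mem_iff] at hw
    rcases hw with rfl | rfl
    · exact huR
    · exact hvR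
  have hxys : ¬ Reach ends F x y := by
    intro h
    exact hdisjRC y (hRx ▸ h) hyC
  -- the swap
  obtain ⟨D', hred, hblue, hother⟩ := swap_decomp D b t e htT heF hes huX hvXr hts
    (fun h => hxys (reach_mono Set.diff_subset h))
  set F' : Set E := (F \ {e}) ∪ {t} with hF'
  have hredF : D'.red = F' := by rw [hF', hF]; exact hred
  -- components of F'
  have htF' : t ∈ F' := Or.inr rfl
  have hFe_sub : F \ {e} ⊆ F' := Set.subset_union_left
  have hxrn' : ¬ Reach ends (F \ {e}) r x := fun h => hxrn (reach_symm h)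
  have hyB : ¬ Reach ends (F \ {e}) r y := by
    intro h
    exact hdisjRC y (hRr ▸ reach_mono Set.diff_subset h) hyC
  have hBcomp : compV ends F' r = compV ends (F \ {e}) r := by
    refine compV_eq_of self_mem_compV
      (fun w hw => reach_mono hFe_sub hw) ?_
    rintro g (hg | hg) w hw hwS w' hw'
    · exact hwS.trans (reach_of_mem_mem hg hw hw')
    · rcases hg with rfl
      rw [hts, Sym2.mem_iff] at hw
      rcases hw with rfl | rfl
      · exact absurd hwS hxrn'
      · exact absurd hwS hyB
  have hCreach : ∀ w ∈ C, Reach ends (F \ {e}) y w := by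
    intro w hw
    rw [hCy] at hw
    refine reach_avoid hw ?_
    intro w' hw' hre
    refine hdisjRC w' (hesR w' hw') ?_
    rw [hCy]
    exact hre
  have hAcomp : compV ends F' x = compV ends (F \ {e}) x ∪ C := by
    refine compV_eq_of (Or.inl self_mem_compV) ?_ ?_
    · rintro w (hw | hw)
      · exact reach_mono hFe_sub hw
      · exact ((reach_step htF' hts).trans (reach_mono hFe_sub (hCreach w hw)))
    · rintro g (hg | hg) w hw hwS w' hw'
      · rcases hwS with hwS | hwS
        · exact Or.inl (hwS.trans (reach_of_mem_mem hg hw hw'))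
        · refine Or.inr ?_
          rw [comps_eq_of_mem hCc hwS]
          exact reach_of_mem_mem hg.1 hw hw'
      · rcases hg with rfl
        rw [hts, Sym2.mem_iff] at hw'
        rcases hw' with rfl | rfl
        · exact Or.inl self_mem_compV
        · exact Or.inr hyC
  have hxSB : x ∉ compV ends F' r := by
    rw [hBcomp]; exact hxrn'
  have hxSA : x ∈ compV ends F' x := self_mem_compV
  have hABne : compV ends F' x ≠ compV ends F' r := fun h => hxSB (h ▸ hxSA)
  -- counts
  set inR : Set E := {g | g ∈ F ∧ ∀ w ∈ ends g, w ∈ RStar} with hinR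
  set inC : Set E := {g | g ∈ F ∧ ∀ w ∈ ends g, w ∈ C} with hinC
  set M : Set E := {g | g ∈ F' ∧ ∀ w ∈ ends g, w ∈ RStar ∪ C} with hMdef
  have hM : M ⊆ ((inR \ {e}) ∪ inC) ∪ {t} := by
    rintro g ⟨hg | hg, hgin⟩
    · left
      obtain ⟨a, b', hsab⟩ := sym2_rep (ends g)
      have ha : a ∈ RStar ∪ C := hgin a (by rw [hsab]; exact Sym2.mem_mk_left _ _)
      rcases ha with ha | ha
      · refine Or.inl ⟨⟨hg.1, ?_⟩, hg.2⟩
        intro w hw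
        have hr := reach_of_mem_mem (ends := ends) hg.1
          (by rw [hsab]; exact Sym2.mem_mk_left _ _) hw
        rw [comps_eq_of_mem hRC ha]
        exact hr
      · refine Or.inr ⟨hg.1, ?_⟩
        intro w hw
        have hr := reach_of_mem_mem (ends := ends) hg.1
          (by rw [hsab]; exact Sym2.mem_mk_left _ _) hw
        rw [comps_eq_of_mem hCc ha]
        exact hr
    · exact Or.inr hg
  have heInR : e ∈ inR := ⟨heF, hesR⟩
  have hMcard : M.ncard ≤ s + eC := by
    have h1 : M.ncard ≤ ((inR \ {e}) ∪ inC).ncard + ({t} : Set E).ncard :=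
      le_trans (Set.ncard_le_ncard hM (Set.toFinite _)) (Set.ncard_union_le _ _)
    have h2 : ((inR \ {e}) ∪ inC).ncard ≤ (inR \ {e}).ncard + inC.ncard :=
      Set.ncard_union_le _ _
    have h3 : (inR \ {e}).ncard = inR.ncard - 1 := Set.ncard_diff_singleton_of_mem heInR
    have h4 : inR.ncard = s := rfl
    have h5 : inC.ncard = eC := rfl
    have h6 : 0 < inR.ncard := (Set.ncard_pos (Set.toFinite _)).2 ⟨e, heInR⟩
    rw [Set.ncard_singleton] at h1
    omega
  -- the two new components and their sizes
  have hBsubR : compV ends F' r ⊆ RStar := by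
    rw [hBcomp, hRr]
    exact compV_mono Set.diff_subset
  have hAsubRC : compV ends F' x ⊆ RStar ∪ C := by
    rw [hAcomp]
    rintro w (hw | hw)
    · refine Or.inl ?_
      rw [hRx]
      exact reach_mono Set.diff_subset hw
    · exact Or.inr hw
  have hsubB : {g | g ∈ F' ∧ ∀ w ∈ ends g, w ∈ compV ends F' r} ⊆ M := by
    rintro g ⟨hg, hgin⟩
    exact ⟨hg, fun w hw => Or.inl (hBsubR (hgin w hw))⟩
  have hsubA : {g | g ∈ F' ∧ ∀ w ∈ ends g, w ∈ compV ends F' x} ⊆ M := by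
    rintro g ⟨hg, hgin⟩
    exact ⟨hg, fun w hw => hAsubRC (hgin w hw)⟩
  have hdisjAB : Disjoint {g | g ∈ F' ∧ ∀ w ∈ ends g, w ∈ compV ends F' x}
      {g | g ∈ F' ∧ ∀ w ∈ ends g, w ∈ compV ends F' r} := by
    rw [Set.disjoint_left]
    rintro g ⟨hg, hgA⟩ ⟨_, hgB⟩
    obtain ⟨a', b', hsab⟩ := sym2_rep (ends g)
    have ha' : a' ∈ ends g := by rw [hsab]; exact Sym2.mem_mk_left _ _
    exact hABne (comps_unique (compV_mem_comps) (compV_mem_comps) (hgA a' ha') (hgB a' ha'))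
  have hEA : eIn ends F' (compV ends F' x) =
      {g | g ∈ F' ∧ ∀ w ∈ ends g, w ∈ compV ends F' x}.ncard := rfl
  have hEB : eIn ends F' (compV ends F' r) =
      {g | g ∈ F' ∧ ∀ w ∈ ends g, w ∈ compV ends F' r}.ncard := rfl
  have hsumAB : eIn ends F' (compV ends F' x) + eIn ends F' (compV ends F' r) ≤ s + eC := by
    have h1 := Set.ncard_union_eq hdisjAB (Set.toFinite _) (Set.toFinite _)
    have h2 := Set.ncard_le_ncard (Set.union_subset hsubA hsubB) (Set.toFinite _)
    rw [hEA, hEB]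
    omega
  have htInA : t ∈ {g | g ∈ F' ∧ ∀ w ∈ ends g, w ∈ compV ends F' x} := by
    refine ⟨htF', ?_⟩
    intro w hw
    rw [hts, Sym2.mem_iff] at hw
    rcases hw with rfl | rfl
    · exact self_mem_compV
    · rw [hAcomp]; exact Or.inr hyC
  have ha1ge : 1 + eC ≤ eIn ends F' (compV ends F' x) := by
    rcases Nat.lt_or_ge eC 1 with h | h
    · have hss : ({t} : Set E) ⊆ {g | g ∈ F' ∧ ∀ w ∈ ends g, w ∈ compV ends F' x} := by
        rintro g rfl; exact htInA
      have := Set.ncard_le_ncard hss (Set.toFinite _)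
      rw [Set.ncard_singleton] at this
      rw [hEA]
      omega
    · -- eC = 1 : C has an edge g0
      have hCne : inC.Nonempty := by
        rw [← Set.ncard_pos (Set.toFinite _)]
        have hii : inC.ncard = eC := rfl
        omega
      obtain ⟨g0, hg0⟩ := hCne
      have hg0e : g0 ≠ e := by
        rintro rfl
        exact hdisjRC u huR (hg0.2 u (by rw [hes]; exact Sym2.mem_mk_left _ _))
      have hg0t : g0 ≠ t := fun hE => htF (hE ▸ hg0.1)
      have hpair : ({t, g0} : Set E) ⊆ {g | g ∈ F' ∧ ∀ w ∈ ends g, w ∈ compV ends F' x} := by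
        rintro g (rfl | rfl)
        · exact htInA
        · refine ⟨hFe_sub ⟨hg0.1, hg0e⟩, ?_⟩
          intro w hw
          rw [hAcomp]
          exact Or.inr (hg0.2 w hw)
      have hc := Set.ncard_le_ncard hpair (Set.toFinite _)
      rw [Set.ncard_pair (Ne.symm hg0t)] at hc
      rw [hEA]
      omega
  have hb1ge : 2 ≤ eIn ends F' (compV ends F' r) :=
    two_in_root_comp (e := e) (F2 := F') hRr hdeg (fun g hg _ hge => hFe_sub ⟨hg, hge⟩)
  have ha1lt : eIn ends F' (compV ends F' x) < s := by omega
  have hb1lt : eIn ends F' (compV ends F' r) < s := by omega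
  -- transfer of untouched components
  set D0 : Set V := RStar ∪ C with hD0
  have hchg : ∀ g, ¬ (g ∈ F ↔ g ∈ F') → ∀ w ∈ ends g, w ∈ D0 := by
    intro g hg w hw
    rcases eq_or_ne g e with rfl | hge
    · exact Or.inl (hesR w hw)
    · rcases eq_or_ne g t with rfl | hgt
      · rw [hts, Sym2.mem_iff] at hw
        rcases hw with rfl | rfl
        · exact Or.inl hxR
        · exact Or.inr hyC
      · exact absurd ⟨fun hgF => hFe_sub ⟨hgF, hge⟩,
          fun hgF' => by
            rcases hgF' with hgF' | hgF'
            · exact hgF'.1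
            · exact absurd hgF' hgt⟩ hg
  have hchg' : ∀ g, ¬ (g ∈ F' ↔ g ∈ F) → ∀ w ∈ ends g, w ∈ D0 :=
    fun g hg => hchg g (fun hiff => hg hiff.symm)
  have hcoverOld : ∀ w ∈ D0, compV ends F w = RStar ∨ compV ends F w = C := by
    rintro w (hw | hw)
    · exact Or.inl (comps_eq_of_mem hRC hw).symm
    · exact Or.inr (comps_eq_of_mem hCc hw).symm
  have hcoverNew : ∀ w ∈ D0,
      compV ends F' w = compV ends F' r ∨ compV ends F' w = compV ends F' x := by
    rintro w (hw | hw)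
    · -- w ∈ RStar
      have hrw : Reach ends F r w := by rw [hRr] at hw; exact hw
      rcases reach_elim_at heF hrw hes with h1 | ⟨h1, h2⟩ | ⟨h1, h2⟩
      · exact Or.inl (comps_eq_of_mem (compV_mem_comps) (reach_mono hFe_sub h1)).symm
      · exact absurd (hxu.trans (reach_symm h1)) hxrn
      · exact Or.inr (comps_eq_of_mem (compV_mem_comps)
          (reach_mono hFe_sub (hxu.trans h2))).symm
    · refine Or.inr (comps_eq_of_mem (compV_mem_comps) ?_).symm
      rw [hAcomp]
      exact Or.inr hw
  have hOld : ∀ S ∈ comps ends F, S ∉ ({RStar, C} : Set (Set V)) →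
      S ∈ comps ends F' ∧ eIn ends F' S = eIn ends F S := by
    intro S hSc hSa
    have hSd : ∀ w ∈ S, w ∉ D0 := by
      intro w hw hwD
      rcases hcoverOld w hwD with h | h
      · exact hSa (Or.inl ((comps_eq_of_mem hSc hw).trans h))
      · exact hSa (Or.inr ((comps_eq_of_mem hSc hw).trans h))
    obtain ⟨v0, rfl⟩ := hSc
    have hcc := comp_transfer (B := F') hchg (fun w hw => hSd w hw)
    constructor
    · rw [← hcc]
      exact compV_mem_comps
    · exact eIn_transfer hchg (fun w hw => hSd w hw)
  have hNew : ∀ S ∈ comps ends F',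
      S ∉ ({compV ends F' r, compV ends F' x} : Set (Set V)) →
      S ∈ comps ends F ∧ eIn ends F' S = eIn ends F S := by
    intro S hSc hSa
    have hSd : ∀ w ∈ S, w ∉ D0 := by
      intro w hw hwD
      rcases hcoverNew w hwD with h | h
      · exact hSa (Or.inl ((comps_eq_of_mem hSc hw).trans h))
      · exact hSa (Or.inr ((comps_eq_of_mem hSc hw).trans h))
    obtain ⟨v0, rfl⟩ := hSc
    have hcc := comp_transfer (A := F') (B := F) hchg' (fun w hw => hSd w hw)
    constructor
    · rw [← hcc]
      exact compV_mem_comps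
    · exact (eIn_transfer hchg' (fun w hw => hSd w hw)).symm
  have hWn : RStar ∉ comps ends F' := by
    intro hc
    have hE : RStar = compV ends F' r := comps_eq_of_mem hc hrR
    exact hxSB (hE ▸ hxR)
  have hrho : RhoLt d ends F' F := by
    refine rho_decrease (d := d) (j := s) (W := RStar) (OldAff := {RStar, C})
      (NewAff := {compV ends F' r, compV ends F' x}) hRBig hOld hNew ?_ ?_ hRC rfl hWn
    · intro S hSc hSa
      rcases hSa with rfl | rfl
      · exact hb1lt
      · exact ha1lt
    · intro S hSc hSa
      rcases hSa with rfl | rfl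
      · exact le_refl _
      · omega
  refine ⟨D', ?_⟩
  rw [hredF]
  exact hrho
end NDT
namespace NDT

variable {V E : Type} [Finite V] [Finite E] {k d : ℕ} {ends : E → Sym2 V}

/-- Part 2: an interesting neighbour of `R*` yields a ρ-decreasing exchange. -/
lemma interesting_swap (hLo : Loopless ends) (D : STDecomp k ends) {RStar L : Set V}
    {r x x' n x'' : V} {b : Fin k}
    (hRC : RStar ∈ comps ends D.red) (hrR : r ∈ RStar)
    (hRBig : d + 1 ≤ eIn ends D.red RStar)
    (hdeg : 3 ≤ degIn ends D.red r ∨ TwoPaths ends D.red r)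
    (hLc : L ∈ comps ends D.red) (hLR : L ≠ RStar)
    (hxR : x ∈ RStar)
    (harc : BlueArc ends r (D.blue b) x x')
    (hx'r : x' ≠ r) (hx'L : x' ∈ L)
    (huniq : ∃! f, f ∈ D.red ∧ x' ∈ ends f)
    (hfex : ∃ f ∈ D.red, ends f = s(x', n))
    (harc' : BlueArc ends r (D.blue b) x' x'')
    (hx''0 : eIn ends D.red (compV ends D.red x'') = 0)
    (hbr : BlueReach ends r (D.blue b) n x) :
    ∃ D' : STDecomp k ends, RhoLt d ends D'.red D.red := by
  classical
  set F := D.red with hF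
  set T := D.blue b with hT
  have hFforest : IsForest ends F := D.forest
  have hTspan : IsSpanningTree ends T := D.tree b
  obtain ⟨t, htT, hts, htcut⟩ := harc
  obtain ⟨t', ht'T, ht's, ht'cut⟩ := harc'
  obtain ⟨f0, hf0F, hf0s⟩ := hfex
  have hx'f0 : x' ∈ ends f0 := by rw [hf0s]; exact Sym2.mem_mk_left _ _
  have hatx' : ∀ g ∈ F, x' ∈ ends g → g = f0 := by
    obtain ⟨f1, hf1, huf⟩ := huniq
    intro g hg hx'g
    rw [huf g ⟨hg, hx'g⟩, huf f0 ⟨hf0F, hx'f0⟩]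
  have hRr : RStar = compV ends F r := comps_eq_of_mem hRC hrR
  have hRx : RStar = compV ends F x := comps_eq_of_mem hRC hxR
  have hLx' : L = compV ends F x' := comps_eq_of_mem hLc hx'L
  have hnL : n ∈ L := by rw [hLx']; exact reach_step hf0F hf0s
  have hdisjRL : ∀ w, w ∈ RStar → w ∈ L → False := fun w h1 h2 =>
    hLR (comps_unique hLc hRC h2 h1)
  have hx'R : x' ∉ RStar := fun h => hdisjRL x' h hx'L
  have hnR : n ∉ RStar := fun h => hdisjRL n h hnL
  have hx'n : x' ≠ n := by
    rintro rfl
    exact hLo f0 (by rw [hf0s]; exact Sym2.mk_isDiag_iff.2 rfl)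
  have hs0 : d + 1 ≤ eIn ends F RStar := hRBig
  have hx''R : x'' ∉ RStar := by
    intro h
    have h1 : RStar = compV ends F x'' := comps_eq_of_mem hRC h
    rw [← h1] at hx''0
    omega
  have hlL : 1 ≤ eIn ends F L := by
    have : f0 ∈ {g | g ∈ F ∧ ∀ w ∈ ends g, w ∈ L} := by
      refine ⟨hf0F, ?_⟩
      intro w hw
      rw [hf0s, Sym2.mem_iff] at hw
      rcases hw with rfl | rfl
      · exact hx'L
      · exact hnL
    have := (Set.ncard_pos (Set.toFinite _)).2 ⟨f0, this⟩
    exact this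
  have hx''L : x'' ∉ L := by
    intro h
    have h1 : L = compV ends F x'' := comps_eq_of_mem hLc h
    rw [← h1] at hx''0
    omega
  have hEx'' : ∀ g ∈ F, x'' ∈ ends g → False := fun g hg hx => no_edge_at hLo hx''0 hg hx
  have hx''r : x'' ≠ r := by
    rintro rfl
    have h1 : RStar = compV ends F x'' := comps_eq_of_mem hRC hrR
    rw [← h1] at hx''0
    omega
  have hx''x : x'' ≠ x := fun h => hx''R (h ▸ hxR)
  have hx''x' : x'' ≠ x' := fun h => hx''L (h ▸ hx'L)
  have htt' : t ≠ t' := by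
    rintro rfl
    rcases Sym2.eq_iff.1 (hts.symm.trans ht's) with ⟨rfl, rfl⟩ | ⟨h1, h2⟩
    · exact hx'R hxR
    · exact hx''x h1.symm
  have hx'rT : Reach ends (T \ {t}) x' r := by
    rcases tree_other_side (r := r) hTspan htT hts with h | h
    · exact absurd h htcut
    · exact h
  have hnXt : ¬ Reach ends (T \ {t}) n r := bluereach_in_cut htT hbr htcut
  have hbrx' : BlueReach ends r T n x' :=
    Relation.ReflTransGen.tail hbr ⟨t, htT, hts, htcut⟩
  have hnXt' : ¬ Reach ends (T \ {t'}) n r := bluereach_in_cut ht'T hbrx' ht'cut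
  have hxXt' : ¬ Reach ends (T \ {t'}) x r :=
    bluereach_in_cut ht'T (Relation.ReflTransGen.single ⟨t, htT, hts, htcut⟩) ht'cut
  have htF : t ∉ F := fun h => red_blue_disjoint D h htT
  have ht'F : t' ∉ F := fun h => red_blue_disjoint D h ht'T
  have hf0T : f0 ∉ T := fun h => red_blue_disjoint D hf0F h
  -- first swap : t becomes red, f0 becomes blue
  have hxx's : ¬ Reach ends (F \ {f0}) x x' := by
    intro h
    exact hdisjRL x' (hRx ▸ reach_mono Set.diff_subset h) hx'L
  obtain ⟨D1, hred1, hblue1, hother1⟩ := swap_decomp D b t f0 htT hf0F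
    (by rw [hf0s, Sym2.eq_swap]) hnXt hx'rT hts hxx's
  set F1 : Set E := (F \ {f0}) ∪ {t} with hF1
  set T1 : Set E := (T \ {t}) ∪ {f0} with hT1
  have hredF1 : D1.red = F1 := by rw [hF1, hF]; exact hred1
  have hblueT1 : D1.blue b = T1 := by rw [hT1, hT]; exact hblue1
  have htF1 : t ∈ F1 := Or.inr rfl
  have hFf0_sub : F \ {f0} ⊆ F1 := Set.subset_union_left
  have hF1forest : IsForest ends F1 := by rw [← hredF1]; exact D1.forest
  have hT1span : IsSpanningTree ends T1 := by rw [← hblueT1]; exact D1.tree b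
  have ht'T1 : t' ∈ T1 := Or.inl ⟨ht'T, Ne.symm htt'⟩
  -- the cut of t' in T1
  have hsetT1 : T1 \ {t'} = insert f0 ((T \ {t}) \ {t'}) := by
    ext g
    simp only [hT1, Set.mem_diff, Set.mem_union, Set.mem_insert_iff, Set.mem_singleton_iff]
    constructor
    · rintro ⟨hg | rfl, hgt'⟩
      · exact Or.inr ⟨hg, hgt'⟩
      · exact Or.inl rfl
    · rintro (rfl | ⟨hg, hgt'⟩)
      · exact ⟨Or.inr rfl, fun hE => hf0T (hE ▸ ht'T)⟩
      · exact ⟨Or.inl hg, hgt'⟩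
  have hsub0 : (T \ {t}) \ {t'} ⊆ T \ {t'} := fun g hg => ⟨hg.1.1, hg.2⟩
  have hsub0' : (T \ {t}) \ {t'} ⊆ T \ {t} := Set.diff_subset
  have hf0s' : ends f0 = s(x', n) := hf0s
  have hx'X'' : ¬ Reach ends (T1 \ {t'}) x' r := by
    intro h
    rw [hsetT1] at h
    rcases reach_insert_elim h hf0s' with h1 | ⟨h1, h2⟩ | ⟨h1, h2⟩
    · exact ht'cut (reach_mono hsub0 h1)
    · exact hnXt' (reach_mono hsub0 h2)
    · exact ht'cut (reach_mono hsub0 h2)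
  have hxX'' : ¬ Reach ends (T1 \ {t'}) x r := by
    intro h
    rw [hsetT1] at h
    rcases reach_insert_elim h hf0s' with h1 | ⟨h1, h2⟩ | ⟨h1, h2⟩
    · exact hxXt' (reach_mono hsub0 h1)
    · exact hnXt' (reach_mono hsub0 h2)
    · exact ht'cut (reach_mono hsub0 h2)
  -- r's component in F1 is RStar ∪ {x'}
  have hRreach1 : ∀ w ∈ RStar, Reach ends (F \ {f0}) r w := by
    intro w hw
    rw [hRr] at hw
    refine reach_avoid hw ?_
    intro w' hw' hre
    rw [hf0s, Sym2.mem_iff] at hw'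
    rcases hw' with rfl | rfl
    · exact hx'R (hRr ▸ hre)
    · exact hnR (hRr ▸ hre)
  have hR'comp : compV ends F1 r = RStar ∪ {x'} := by
    refine compV_eq_of (Or.inl hrR) ?_ ?_
    · rintro w (hw | rfl)
      · exact reach_mono hFf0_sub (hRreach1 w hw)
      · exact (reach_mono hFf0_sub (hRreach1 x hxR)).trans (reach_step htF1 hts)
    · rintro g (hg | hg) w hw hwS w' hw'
      · rcases hwS with hwS | hwS
        · refine Or.inl ?_
          have hr := reach_of_mem_mem (A := F) hg.1 hw hw'
          have : RStar = compV ends F w := comps_eq_of_mem hRC hwS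
          rw [this]
          exact hr
        · rcases hwS with rfl
          exact absurd (hatx' g hg.1 hw) hg.2
      · rcases hg with rfl
        rw [hts, Sym2.mem_iff] at hw'
        rcases hw' with rfl | rfl
        · exact Or.inl hxR
        · exact Or.inr rfl
  have hrx'F1 : Reach ends F1 x' r := by
    refine reach_symm ?_
    have : x' ∈ compV ends F1 r := by rw [hR'comp]; exact Or.inr rfl
    exact this
  -- the crossing red edge e in F1
  obtain ⟨e, u, v, heF1, hes', huX'', hvX'', hx'u, hvr, hx'rn⟩ :=
    exists_cross (X := {z | ¬ Reach ends (T1 \ {t'}) z r}) hF1forest hrx'F1 hx'X''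
      (fun hnr => hnr reach_refl)
  have hvX''r : Reach ends (T1 \ {t'}) v r := not_not.1 hvX''
  have het : e ≠ t := by
    rintro rfl
    rcases Sym2.eq_iff.1 (hes'.symm.trans hts) with ⟨rfl, rfl⟩ | ⟨rfl, rfl⟩
    · exact hvX'' hx'X''
    · exact hvX'' hxX''
  have heFf0 : e ∈ F \ {f0} := by
    rcases heF1 with h | h
    · exact h
    · exact absurd h het
  have hex' : x' ∉ ends e := fun h => heFf0.2 (hatx' e heFf0.1 h)
  have huR' : u ∈ RStar ∪ {x'} := by
    rw [← hR'comp]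
    exact (reach_symm hrx'F1).trans (reach_mono Set.diff_subset hx'u)
  have hvR' : v ∈ RStar ∪ {x'} := by
    rw [← hR'comp]
    exact reach_symm (reach_mono Set.diff_subset hvr)
  have huR : u ∈ RStar := by
    rcases huR' with h | rfl
    · exact h
    · exact absurd (by rw [hes']; exact Sym2.mem_mk_left _ _) hex'
  have hvR : v ∈ RStar := by
    rcases hvR' with h | rfl
    · exact h
    · exact absurd (by rw [hes']; exact Sym2.mem_mk_right _ _) hex'
  have hesR : ∀ w ∈ ends e, w ∈ RStar := by
    intro w hw
    rw [hes', Sym2.mem_iff] at hw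
    rcases hw with rfl | rfl
    · exact huR
    · exact hvR
  -- no F1-edge at x''
  have hF1nox'' : ∀ g ∈ F1, x'' ∈ ends g → False := by
    rintro g (hg | hg) hx
    · exact hEx'' g hg.1 hx
    · rcases hg with rfl
      rw [hts, Sym2.mem_iff] at hx
      rcases hx with h | h
      · exact hx''x h
      · exact hx''x' h
  have hx''iso : ∀ z, Reach ends (F1 \ {e}) x'' z → z = x'' := by
    intro z hz
    rcases Relation.ReflTransGen.cases_head hz with h | ⟨c, ⟨g, hg, hs⟩, _⟩
    · exact h.symm
    · exact absurd (by rw [hs]; exact Sym2.mem_mk_left _ _) (fun hc => hF1nox'' g hg.1 hc)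
  -- second swap : t' becomes red, e becomes blue
  have hx'x''s : ¬ Reach ends (F1 \ {e}) x' x'' := by
    intro h
    have := hx''iso x' (reach_symm h)
    exact hx''x' this.symm
  have ht'B1 : t' ∈ D1.blue b := by rw [hblueT1]; exact ht'T1
  have heR1 : e ∈ D1.red := by rw [hredF1]; exact heF1
  obtain ⟨D2, hred2, hblue2, hother2⟩ := swap_decomp D1 b t' e ht'B1 heR1
    hes' (by rw [hblueT1]; exact huX'')
    (by rw [hblueT1]; exact hvX''r) ht's (by rw [hredF1]; exact hx'x''s)
  set F2 : Set E := (F1 \ {e}) ∪ {t'} with hF2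
  have hredF2 : D2.red = F2 := by rw [hF2, ← hredF1]; exact hred2
  have ht'F2 : t' ∈ F2 := Or.inr rfl
  have hF1e_sub : F1 \ {e} ⊆ F2 := Set.subset_union_left
  have htF2 : t ∈ F2 := Or.inl ⟨htF1, het ∘ Eq.symm⟩
  -- components of F2
  have hx'rn' : ¬ Reach ends (F1 \ {e}) r x' := fun h => hx'rn (reach_symm h)
  have hB2 : compV ends F2 r = compV ends (F1 \ {e}) r := by
    refine compV_eq_of self_mem_compV (fun w hw => reach_mono hF1e_sub hw) ?_
    rintro g (hg | hg) w hw hwS w' hw'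
    · exact hwS.trans (reach_of_mem_mem hg hw hw')
    · rcases hg with rfl
      rw [ht's, Sym2.mem_iff] at hw
      rcases hw with rfl | rfl
      · exact absurd hwS hx'rn'
      · exact absurd (hx''iso r (reach_symm hwS)).symm hx''r
  have hA2 : compV ends F2 x' = compV ends (F1 \ {e}) x' ∪ {x''} := by
    refine compV_eq_of (Or.inl self_mem_compV) ?_ ?_
    · rintro w (hw | rfl)
      · exact reach_mono hF1e_sub hw
      · exact reach_step ht'F2 ht's
    · rintro g (hg | hg) w hw hwS w' hw'
      · rcases hwS with hwS | hwS
        · exact Or.inl (hwS.trans (reach_of_mem_mem hg hw hw'))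
        · rcases hwS with rfl
          exact absurd hw (fun hc => hF1nox'' g hg.1 hc)
      · rcases hg with rfl
        rw [ht's, Sym2.mem_iff] at hw'
        rcases hw' with rfl | rfl
        · exact Or.inl self_mem_compV
        · exact Or.inr rfl
  -- L minus x' : reachability
  have hX'iso : ∀ z, Reach ends (F \ {f0}) x' z → z = x' := by
    intro z hz
    rcases Relation.ReflTransGen.cases_head hz with h | ⟨c, ⟨g, hg, hs⟩, _⟩
    · exact h.symm
    · exact absurd (hatx' g hg.1 (by rw [hs]; exact Sym2.mem_mk_left _ _)) hg.2
  have hLreach : ∀ w ∈ L, w ≠ x' → Reach ends (F \ {f0}) n w := by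
    intro w hw hwx'
    have hnw : Reach ends F n w := by
      have h1 : Reach ends F x' n := reach_step hf0F hf0s
      have h2 : Reach ends F x' w := by rw [hLx'] at hw; exact hw
      exact (reach_symm h1).trans h2
    rcases reach_elim_at hf0F hnw hf0s with h1 | ⟨h1, h2⟩ | ⟨h1, h2⟩
    · exact h1
    · exact h2
    · exact absurd (hX'iso w h2) hwx'
  have hLreach2 : ∀ w ∈ L, w ≠ x' → Reach ends ((F \ {f0}) \ {e}) n w := by
    intro w hw hwx'
    refine reach_avoid (hLreach w hw hwx') ?_
    intro w' hw' hre
    have hw'L : w' ∈ L := by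
      rw [hLx']
      exact (reach_step hf0F hf0s).trans (reach_mono Set.diff_subset hre)
    exact hdisjRL w' (hesR w' hw') hw'L
  have hFf0e_sub : (F \ {f0}) \ {e} ⊆ F2 := by
    intro g hg
    exact Or.inl ⟨Or.inl hg.1, hg.2⟩
  have hnx' : n ≠ x' := Ne.symm hx'n
  have hN2 : compV ends F2 n = L \ {x'} := by
    refine compV_eq_of ⟨hnL, hnx'⟩ ?_ ?_
    · rintro w ⟨hw, hwx'⟩
      exact reach_mono hFf0e_sub (hLreach2 w hw hwx')
    · rintro g (hg | hg) w hw hwS w' hw'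
      · rcases hg.1 with hgf | hgt
        · -- g ∈ F \ {f0}
          refine ⟨?_, ?_⟩
          · have : L = compV ends F w := comps_eq_of_mem hLc hwS.1
            rw [this]
            exact reach_of_mem_mem hgf.1 hw hw'
          · rintro rfl
            exact hgf.2 (hatx' g hgf.1 hw')
        · rcases hgt with rfl
          rw [hts, Sym2.mem_iff] at hw
          rcases hw with rfl | rfl
          · exact absurd hwS.1 (fun hc => hdisjRL w hxR hc)
          · exact absurd rfl hwS.2
      · rcases hg with rfl
        rw [ht's, Sym2.mem_iff] at hw
        rcases hw with rfl | rfl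
        · exact absurd rfl hwS.2
        · exact absurd hwS.1 hx''L
  -- memberships and distinctness
  have hx'B2 : x' ∉ compV ends F2 r := by rw [hB2]; exact hx'rn'
  have hxA2 : x ∈ compV ends F2 x' := reach_symm (reach_step htF2 hts)
  have hx''A2 : x'' ∈ compV ends F2 x' := by rw [hA2]; exact Or.inr rfl
  have hABne2 : compV ends F2 x' ≠ compV ends F2 r := fun h => hx'B2 (h ▸ self_mem_compV)
  -- size of the L component
  have hlN : eIn ends F2 (L \ {x'}) = eIn ends F L - 1 := by
    have hseteq : {g | g ∈ F2 ∧ ∀ w ∈ ends g, w ∈ L \ {x'}} =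
        {g | g ∈ F ∧ ∀ w ∈ ends g, w ∈ L} \ {f0} := by
      ext g
      simp only [Set.mem_setOf_eq, Set.mem_diff, Set.mem_singleton_iff]
      constructor
      · rintro ⟨hg | hg, hgin⟩
        · rcases hg.1 with hgf | hgt
          · refine ⟨⟨hgf.1, fun w hw => (hgin w hw).1⟩, hgf.2⟩
          · rcases hgt with rfl
            exact absurd (hgin x (by rw [hts]; exact Sym2.mem_mk_left _ _)).1
              (fun hc => hdisjRL x hxR hc)
        · rcases hg with rfl
          exact absurd (hgin x' (by rw [ht's]; exact Sym2.mem_mk_left _ _)).2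
            (fun hc => hc rfl)
      · rintro ⟨⟨hgF, hgin⟩, hgf0⟩
        have hge : g ≠ e := by
          rintro rfl
          exact hdisjRL u huR (hgin u (by rw [hes']; exact Sym2.mem_mk_left _ _))
        refine ⟨hFf0e_sub ⟨⟨hgF, hgf0⟩, hge⟩, ?_⟩
        intro w hw
        refine ⟨hgin w hw, ?_⟩
        rintro rfl
        exact hgf0 (hatx' g hgF hw)
    have hf0in : f0 ∈ {g | g ∈ F ∧ ∀ w ∈ ends g, w ∈ L} := by
      refine ⟨hf0F, ?_⟩
      intro w hw
      rw [hf0s, Sym2.mem_iff] at hw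
      rcases hw with rfl | rfl
      · exact hx'L
      · exact hnL
    show {g | g ∈ F2 ∧ ∀ w ∈ ends g, w ∈ L \ {x'}}.ncard = _
    rw [hseteq, Set.ncard_diff_singleton_of_mem hf0in]
    rfl
  -- bounds on the two pieces of R'
  set inR : Set E := {g | g ∈ F ∧ ∀ w ∈ ends g, w ∈ RStar} with hinR
  have heInR : e ∈ inR := ⟨heFf0.1, hesR⟩
  set M2 : Set E := {g | g ∈ F2 ∧ ∀ w ∈ ends g, w ∈ (RStar ∪ {x'}) ∪ {x''}} with hM2
  have hM2sub : M2 ⊆ ((inR \ {e}) ∪ {t}) ∪ {t'} := by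
    rintro g ⟨hg | hg, hgin⟩
    · rcases hg.1 with hgf | hgt
      · refine Or.inl (Or.inl ⟨⟨hgf.1, ?_⟩, hg.2⟩)
        intro w hw
        rcases hgin w hw with (hw1 | rfl) | rfl
        · exact hw1
        · exact absurd (hatx' g hgf.1 hw) hgf.2
        · exact absurd hw (fun hc => hEx'' g hgf.1 hc)
      · exact Or.inl (Or.inr hgt)
    · exact Or.inr hg
  have hBsubR2 : compV ends F2 r ⊆ RStar ∪ {x'} := by
    rw [hB2, ← hR'comp]
    exact compV_mono Set.diff_subset
  have hAsubR2 : compV ends F2 x' ⊆ (RStar ∪ {x'}) ∪ {x''} := by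
    rw [hA2]
    rintro w (hw | rfl)
    · refine Or.inl ?_
      rw [← hR'comp]
      exact (reach_symm hrx'F1).trans (reach_mono Set.diff_subset hw)
    · exact Or.inr rfl
  have hsubB2 : {g | g ∈ F2 ∧ ∀ w ∈ ends g, w ∈ compV ends F2 r} ⊆ M2 := by
    rintro g ⟨hg, hgin⟩
    exact ⟨hg, fun w hw => Or.inl (hBsubR2 (hgin w hw))⟩
  have hsubA2 : {g | g ∈ F2 ∧ ∀ w ∈ ends g, w ∈ compV ends F2 x'} ⊆ M2 := by
    rintro g ⟨hg, hgin⟩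
    exact ⟨hg, fun w hw => hAsubR2 (hgin w hw)⟩
  have hdisjAB2 : Disjoint {g | g ∈ F2 ∧ ∀ w ∈ ends g, w ∈ compV ends F2 x'}
      {g | g ∈ F2 ∧ ∀ w ∈ ends g, w ∈ compV ends F2 r} := by
    rw [Set.disjoint_left]
    rintro g ⟨hg, hgA⟩ ⟨_, hgB⟩
    obtain ⟨a', b', hsab⟩ := sym2_rep (ends g)
    have ha' : a' ∈ ends g := by rw [hsab]; exact Sym2.mem_mk_left _ _
    exact hABne2 (comps_unique compV_mem_comps compV_mem_comps (hgA a' ha') (hgB a' ha'))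
  have hM2card : M2.ncard ≤ eIn ends F RStar + 1 := by
    have h1 : M2.ncard ≤ ((inR \ {e}) ∪ {t}).ncard + ({t'} : Set E).ncard :=
      le_trans (Set.ncard_le_ncard hM2sub (Set.toFinite _)) (Set.ncard_union_le _ _)
    have h2 : ((inR \ {e}) ∪ {t}).ncard ≤ (inR \ {e}).ncard + ({t} : Set E).ncard :=
      Set.ncard_union_le _ _
    have h3 : (inR \ {e}).ncard = inR.ncard - 1 := Set.ncard_diff_singleton_of_mem heInR
    have h4 : inR.ncard = eIn ends F RStar := rfl
    have h6 : 0 < inR.ncard := (Set.ncard_pos (Set.toFinite _)).2 ⟨e, heInR⟩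
    rw [Set.ncard_singleton] at h1 h2
    omega
  have hEA2 : eIn ends F2 (compV ends F2 x') =
      {g | g ∈ F2 ∧ ∀ w ∈ ends g, w ∈ compV ends F2 x'}.ncard := rfl
  have hEB2 : eIn ends F2 (compV ends F2 r) =
      {g | g ∈ F2 ∧ ∀ w ∈ ends g, w ∈ compV ends F2 r}.ncard := rfl
  have hsumAB2 : eIn ends F2 (compV ends F2 x') + eIn ends F2 (compV ends F2 r) ≤
      eIn ends F RStar + 1 := by
    have h1 := Set.ncard_union_eq hdisjAB2 (Set.toFinite _) (Set.toFinite _)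
    have h2 := Set.ncard_le_ncard (Set.union_subset hsubA2 hsubB2) (Set.toFinite _)
    rw [hEA2, hEB2]
    omega
  have ha2ge : 2 ≤ eIn ends F2 (compV ends F2 x') := by
    have hpair : ({t, t'} : Set E) ⊆
        {g | g ∈ F2 ∧ ∀ w ∈ ends g, w ∈ compV ends F2 x'} := by
      rintro g (rfl | rfl)
      · refine ⟨htF2, ?_⟩
        intro w hw
        rw [hts, Sym2.mem_iff] at hw
        rcases hw with rfl | rfl
        · exact hxA2
        · exact self_mem_compV
      · refine ⟨ht'F2, ?_⟩
        intro w hw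
        rw [ht's, Sym2.mem_iff] at hw
        rcases hw with rfl | rfl
        · exact self_mem_compV
        · exact hx''A2
    have hc := Set.ncard_le_ncard hpair (Set.toFinite _)
    rw [Set.ncard_pair htt'] at hc
    rw [hEA2]
    omega
  have hb2ge : 2 ≤ eIn ends F2 (compV ends F2 r) := by
    refine two_in_root_comp (e := e) (F2 := F2) hRr hdeg ?_
    intro g hg hgin hge
    have hgf0 : g ≠ f0 := by
      rintro rfl
      exact hx'R (hgin x' hx'f0)
    exact hFf0e_sub ⟨⟨hg, hgf0⟩, hge⟩
  have ha2lt : eIn ends F2 (compV ends F2 x') < eIn ends F RStar := by omega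
  have hb2lt : eIn ends F2 (compV ends F2 r) < eIn ends F RStar := by omega
  -- transfers
  set D0 : Set V := (RStar ∪ L) ∪ {x''} with hD0
  have hchg : ∀ g, ¬ (g ∈ F ↔ g ∈ F2) → ∀ w ∈ ends g, w ∈ D0 := by
    intro g hg w hw
    rcases eq_or_ne g e with rfl | hge
    · exact Or.inl (Or.inl (hesR w hw))
    · rcases eq_or_ne g f0 with rfl | hgf0
      · refine Or.inl (Or.inr ?_)
        rw [hf0s, Sym2.mem_iff] at hw
        rcases hw with rfl | rfl
        · exact hx'L
        · exact hnL
      · rcases eq_or_ne g t with rfl | hgt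
        · rw [hts, Sym2.mem_iff] at hw
          rcases hw with rfl | rfl
          · exact Or.inl (Or.inl hxR)
          · exact Or.inl (Or.inr hx'L)
        · rcases eq_or_ne g t' with rfl | hgt'
          · rw [ht's, Sym2.mem_iff] at hw
            rcases hw with rfl | rfl
            · exact Or.inl (Or.inr hx'L)
            · exact Or.inr rfl
          · refine absurd ⟨fun hgF => hFf0e_sub ⟨⟨hgF, hgf0⟩, hge⟩, ?_⟩ hg
            rintro (hgF2 | hgF2)
            · rcases hgF2.1 with h | h
              · exact h.1
              · exact absurd h hgt
            · exact absurd hgF2 hgt'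
  have hchg' : ∀ g, ¬ (g ∈ F2 ↔ g ∈ F) → ∀ w ∈ ends g, w ∈ D0 :=
    fun g hg => hchg g (fun hiff => hg hiff.symm)
  have hcoverOld : ∀ w ∈ D0, compV ends F w = RStar ∨ compV ends F w = L ∨
      compV ends F w = compV ends F x'' := by
    rintro w ((hw | hw) | rfl)
    · exact Or.inl (comps_eq_of_mem hRC hw).symm
    · exact Or.inr (Or.inl (comps_eq_of_mem hLc hw).symm)
    · exact Or.inr (Or.inr rfl)
  have hcoverNew : ∀ w ∈ D0, compV ends F2 w = compV ends F2 r ∨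
      compV ends F2 w = compV ends F2 x' ∨ compV ends F2 w = compV ends F2 n := by
    rintro w ((hw | hw) | rfl)
    · -- w ∈ RStar ⊆ R'
      have hrw : Reach ends F1 r w := by
        have : w ∈ compV ends F1 r := by rw [hR'comp]; exact Or.inl hw
        exact this
      rcases reach_elim_at heF1 hrw hes' with h1 | ⟨h1, h2⟩ | ⟨h1, h2⟩
      · refine Or.inl (comps_eq_of_mem compV_mem_comps ?_).symm
        rw [hB2]
        exact h1
      · exact absurd (hx'u.trans (reach_symm h1)) hx'rn
      · refine Or.inr (Or.inl (comps_eq_of_mem compV_mem_comps ?_).symm)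
        rw [hA2]
        exact Or.inl (hx'u.trans h2)
    · -- w ∈ L
      rcases eq_or_ne w x' with rfl | hwx'
      · exact Or.inr (Or.inl rfl)
      · refine Or.inr (Or.inr (comps_eq_of_mem compV_mem_comps ?_).symm)
        rw [hN2]
        exact ⟨hw, hwx'⟩
    · refine Or.inr (Or.inl (comps_eq_of_mem compV_mem_comps hx''A2).symm)
  have hOld : ∀ S ∈ comps ends F,
      S ∉ ({RStar, L, compV ends F x''} : Set (Set V)) →
      S ∈ comps ends F2 ∧ eIn ends F2 S = eIn ends F S := by
    intro S hSc hSa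
    have hSd : ∀ w ∈ S, w ∉ D0 := by
      intro w hw hwD
      rcases hcoverOld w hwD with h | h | h
      · exact hSa (Or.inl ((comps_eq_of_mem hSc hw).trans h))
      · exact hSa (Or.inr (Or.inl ((comps_eq_of_mem hSc hw).trans h)))
      · exact hSa (Or.inr (Or.inr ((comps_eq_of_mem hSc hw).trans h)))
    obtain ⟨v0, rfl⟩ := hSc
    have hcc := comp_transfer (B := F2) hchg (fun w hw => hSd w hw)
    constructor
    · rw [← hcc]
      exact compV_mem_comps
    · exact eIn_transfer hchg (fun w hw => hSd w hw)
  have hNew : ∀ S ∈ comps ends F2,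
      S ∉ ({compV ends F2 r, compV ends F2 x', compV ends F2 n} : Set (Set V)) →
      S ∈ comps ends F ∧ eIn ends F2 S = eIn ends F S := by
    intro S hSc hSa
    have hSd : ∀ w ∈ S, w ∉ D0 := by
      intro w hw hwD
      rcases hcoverNew w hwD with h | h | h
      · exact hSa (Or.inl ((comps_eq_of_mem hSc hw).trans h))
      · exact hSa (Or.inr (Or.inl ((comps_eq_of_mem hSc hw).trans h)))
      · exact hSa (Or.inr (Or.inr ((comps_eq_of_mem hSc hw).trans h)))
    obtain ⟨v0, rfl⟩ := hSc
    have hcc := comp_transfer (A := F2) (B := F) hchg' (fun w hw => hSd w hw)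
    constructor
    · rw [← hcc]
      exact compV_mem_comps
    · exact (eIn_transfer hchg' (fun w hw => hSd w hw)).symm
  -- the component of n in F2 is L \ {x'} with value ℓ - 1
  have hcompn2 : compV ends F2 n ∈ comps ends F2 := compV_mem_comps
  have hlN' : eIn ends F2 (compV ends F2 n) = eIn ends F L - 1 := by rw [hN2]; exact hlN
  -- final case analysis
  rcases le_or_gt (eIn ends F L) (eIn ends F RStar) with hls | hls
  · -- j = s, W = RStar
    have hWn : RStar ∉ comps ends F2 := by
      intro hc
      have hE : RStar = compV ends F2 r := comps_eq_of_mem hc hrR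
      have hxB : x ∈ compV ends F2 r := hE ▸ hxR
      rw [hB2] at hxB
      exact hx'rn' (hxB.trans (reach_step ⟨htF1, het ∘ Eq.symm⟩ hts))
    have hrho : RhoLt d ends F2 F := by
      refine rho_decrease (d := d) (j := eIn ends F RStar) (W := RStar)
        (OldAff := {RStar, L, compV ends F x''})
        (NewAff := {compV ends F2 r, compV ends F2 x', compV ends F2 n})
        hRBig hOld hNew ?_ ?_ hRC rfl hWn
      · intro S hSc hSa
        rcases hSa with rfl | rfl | rfl
        · exact hb2lt
        · exact ha2lt
        · omega
      · intro S hSc hSa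
        rcases hSa with rfl | rfl | rfl
        · exact le_refl _
        · exact hls
        · omega
    refine ⟨D2, ?_⟩
    rw [hredF2]
    exact hrho
  · -- j = ℓ, W = L
    have hWn : L ∉ comps ends F2 := by
      intro hc
      have hE : L = compV ends F2 x' := comps_eq_of_mem hc hx'L
      exact hx''L (hE ▸ hx''A2)
    have hrho : RhoLt d ends F2 F := by
      refine rho_decrease (d := d) (j := eIn ends F L) (W := L)
        (OldAff := {RStar, L, compV ends F x''})
        (NewAff := {compV ends F2 r, compV ends F2 x', compV ends F2 n})
        (by omega) hOld hNew ?_ ?_ hLc rfl hWn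
      · intro S hSc hSa
        rcases hSa with rfl | rfl | rfl
        · omega
        · omega
        · omega
      · intro S hSc hSa
        rcases hSa with rfl | rfl | rfl
        · omega
        · exact le_refl _
        · omega
    refine ⟨D2, ?_⟩
    rw [hredF2]
    exact hrho
end NDT

open NDT in
theorem rootNoChildren (k d : ℕ) (hk : 1 ≤ k) (hd1 : k + 1 < d) (hd2 : d ≤ 2 * (k + 1))
    {V E : Type} [Fintype V] [Fintype E] (ends : E → Sym2 V)
    -- `G` is a vertex-minimal counterexample
    (hG : MinimalCounterexample k d ends)
    -- the fixed decomposition `𝒯* = (T_1, …, T_k, F)`, the component `R*` and the root `r`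
    (D : STDecomp k ends) (RStar : Set V) (r : V)
    -- `R*` is a connected component of the red forest `F` (so `𝒯* ∈ ℱ`)
    (hRComp : RStar ∈ comps ends D.red)
    -- `F` attains the minimum `ρ*` over all decompositions into `k` spanning trees
    -- and a forest (so `𝒯* ∈ ℱ*`)
    (hRhoMin : ∀ D' : STDecomp k ends, ¬ RhoLt d ends D'.red D.red)
    -- `R*` has at least `d + 1` edges
    (hRBig : d + 1 ≤ eIn ends D.red RStar)
    -- `r ∈ R*` has degree at least 3 in `R*` or, if no vertex of `R*` has degree at
    -- least 3, two edge-disjoint paths of length at least 2 in `R*` start at `r`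
    (hrR : r ∈ RStar)
    (hrDeg : 3 ≤ degIn ends D.red r ∨
      ((∀ v ∈ RStar, ¬ 3 ≤ degIn ends D.red v) ∧ TwoPaths ends D.red r))
    -- the fixed legal order `σ*` for `𝒯*`
    (σ : List (Set V)) (hσ : IsLegalOrder ends r RStar D σ)
    -- the fixed choice of generating arcs: component `σ_j` is a child of the
    -- component `σ_{pIdx j}` generated by the blue arc `(aX j, aY j)` of tree `aB j`
    (pIdx : ℕ → ℕ) (aX aY : ℕ → V) (aB : ℕ → Fin k)
    (hArcs : ∀ j, 0 < j → j < σ.length →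
      pIdx j < j ∧ aX j ∈ σ.getD (pIdx j) ∅ ∧ aY j ∈ σ.getD j ∅ ∧
      BlueArc ends r (D.blue (aB j)) (aX j) (aY j))
    -- no decomposition in `ℱ*` admits a legal order strictly smaller than `σ*`
    (hσMin : ∀ D' : STDecomp k ends, RStar ∈ comps ends D'.red →
      SameRho d ends D'.red D.red → ∀ L', IsLegalOrder ends r RStar D' L' →
      ¬ SeqLt (L'.map (eIn ends D'.red)) (σ.map (eIn ends D.red))) :
    -- `R*` has no relevant neighbours: no red component is a small child of `R*`
    -- w.r.t. `𝒯*` and `σ*`, and no red component is an interesting neighbour of `R*`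
    (∀ C : Set V, IsChild σ pIdx aX aY aB RStar C → ¬ IsSmall ends D.red C) ∧
    (∀ (C : Set V) (b : Fin k) (x x' : V),
        ¬ InterestingNbr ends r D σ pIdx aX aY aB RStar C b x x') := by

  have hdeg : 3 ≤ degIn ends D.red r ∨ TwoPaths ends D.red r := by
    rcases hrDeg with h | h
    · exact Or.inl h
    · exact Or.inr h.2
  constructor
  · -- no small child of R*
    rintro C ⟨x0, y0, b0, j0, hj0pos, hj0len, hCj, hRj, hXj, hYj, hBj⟩ hSmall
    obtain ⟨hpj, hxin, hyin, harc⟩ := hArcs j0 hj0pos hj0len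
    rw [hRj] at hxin
    rw [hCj] at hyin
    -- C is a red component
    have hCmem : C ∈ σ := by
      rw [← hCj, List.getD_eq_getElem σ ∅ hj0len]
      exact List.getElem_mem _
    have hCcomp : C ∈ comps ends D.red := ((hσ.2.2.1 C).1 hCmem).1
    -- C ≠ RStar
    have hσ0 : σ.getD 0 ∅ = RStar := by
      cases σ with
      | nil => simp at hj0len
      | cons a l =>
        have : a = RStar := by
          have := hσ.1
          simp [List.head?] at this
          exact this
        simp [this]
    have hCR : C ≠ RStar := by
      intro hE
      have hlen0 : 0 < σ.length := by omega
      have : σ[j0]'hj0len = σ[0]'hlen0 := by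
        rw [← List.getD_eq_getElem σ ∅ hj0len, ← List.getD_eq_getElem σ ∅ hlen0, hCj, hσ0, hE]
      have := (List.Nodup.getElem_inj_iff hσ.2.1).1 this
      omega
    obtain ⟨D', hrho⟩ := small_child_swap (d := d) D hRComp hrR hRBig hdeg hCcomp hCR
      hxin hyin harc hSmall
    exact hRhoMin D' hrho
  · -- no interesting neighbour of R*
    rintro C b x x' ⟨hCred, hCR, hxR, harc, hx'r, hx'C, huniq,
      n, x'', ⟨f, hfF, hfs⟩, harc', h0, hchild, hbr⟩
    obtain ⟨D', hrho⟩ := interesting_swap (d := d) hG.1 D hRComp hrR hRBig hdeg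
      hCred.1 hCR hxR harc hx'r hx'C huniq ⟨f, hfF, hfs⟩ harc' h0 hbr
    exact hRhoMin D' hrho
end
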